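/- arXiv:2210.02319 — 8 statements merged into one kernel-verified Lean document; each statement's English description precedes it below -/
import Mathlib

section
/- Fix an integer k ≥ 1 and an integer i with 0 ≤ i ≤ k. For the absorbing birth–death chain started at i, the probability that the trajectory never exceeds k (i.e. μ_i({ω ∈ ℤ^ℕ : ∀ n ∈ ℕ, ω_n ≤ k})) equals (∑_{n=i}^{k} c_n) / (1 + ∑_{n=0}^{k} c_n). -/
open MeasureTheory

/-- Transition probabilities of the absorbing birth-death chain on `ℤ`:
for `i ≥ 0`, move to `i+1` with probability `p i` and to `i-1` with probability `q i`;
every `i < 0` is absorbing. -/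
noncomputable def bdKernel (p q : ℕ → ℝ) : ℤ → ℤ → ℝ := fun i j =>
  if 0 ≤ i then
    (if j = i + 1 then p i.toNat else if j = i - 1 then q i.toNat else 0)
  else
    (if j = i then 1 else 0)

/-- `μ i` is the law (on path space, obtained via Ionescu–Tulcea) of the absorbing
birth-death chain started at `i`, characterised by its finite-dimensional (cylinder)
distributions. -/
def IsBDLaw (p q : ℕ → ℝ) (μ : ℤ → Measure (ℕ → ℤ)) : Prop :=
  ∀ (i : ℤ) (n : ℕ) (f : ℕ → ℤ),
    μ i {ω : ℕ → ℤ | ∀ m ≤ n, ω m = f m} =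
      ENNReal.ofReal ((if f 0 = i then (1 : ℝ) else 0) *
        ∏ m ∈ Finset.range n, bdKernel p q (f m) (f (m + 1)))

/-- `cseq p q n = ∏_{j=0}^{n} q_j / p_j`. -/
noncomputable def cseq (p q : ℕ → ℝ) (n : ℕ) : ℝ :=
  ∏ j ∈ Finset.range (n + 1), q j / p j

/-!
Let `A n` be the event that the path stays in `(-∞, k]` up to time `n`. Conditioning on the first
step (the Markov property on cylinders) gives
`μ j (A (n+1)) = p j * μ (j+1) (A n) + q j * μ (j-1) (A n)` for `0 ≤ j ≤ k`, while `μ j (A n)` is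
`1` for `j < 0` and `0` for `j > k`. By continuity from above, `u j = μ j (⋂ n, A n)` is harmonic
on `{0, …, k}` with `u (-1) = 1` and `u (k+1) = 0`. Harmonicity gives
`u (j+1) - u j = c_j * (u 0 - u (-1))`, and summing these increments between the two boundary
values determines `u`.
-/

open Filter Topology Finset
open scoped ENNReal

/-- `IsBDLaw p q μ` unfolds to `IsMarkovLaw (bdKernel p q) μ`. -/
def IsMarkovLaw (P : ℤ → ℤ → ℝ) (μ : ℤ → Measure (ℕ → ℤ)) : Prop :=
  ∀ (i : ℤ) (n : ℕ) (f : ℕ → ℤ),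
    μ i {ω : ℕ → ℤ | ∀ m ≤ n, ω m = f m} =
      ENNReal.ofReal ((if f 0 = i then (1 : ℝ) else 0) *
        ∏ m ∈ range n, P (f m) (f (m + 1)))

def pathCylinder {n : ℕ} (b : Fin (n + 1) → ℤ) : Set (ℕ → ℤ) :=
  {ω | ∀ m : Fin (n + 1), ω m = b m}

def staysIn (S : Set ℤ) (n : ℕ) : Set (ℕ → ℤ) :=
  {ω | ∀ m ≤ n, ω m ∈ S}

lemma tsum_subtype_ite_eq {α M : Type*} [AddCommMonoid M] [TopologicalSpace M] [DecidableEq α]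
    (S : Set α) (F : α → M) (j : α) :
    ∑' a : S, (if (a : α) = j then F a else 0) = S.indicator F j := by
  rw [tsum_subtype S fun a => if a = j then F a else 0]
  have : S.indicator (fun a => if a = j then F a else 0) =
      fun a => if a = j then S.indicator F j else 0 := by
    ext a
    split_ifs with h
    · subst h
      simp [Set.indicator]
    · simp [h]
  rw [this, tsum_ite_eq]

lemma measurableSet_pathCylinder {n : ℕ} (b : Fin (n + 1) → ℤ) :
    MeasurableSet (pathCylinder b) := by
  simp only [pathCylinder, Set.ofPred_forall]
  exact .iInter fun m => measurableSet_eq_fun (measurable_pi_apply _) measurable_const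

lemma measurableSet_staysIn (S : Set ℤ) (n : ℕ) : MeasurableSet (staysIn S n) := by
  simp only [staysIn, Set.ofPred_forall]
  exact .iInter fun m => .iInter fun _ => measurable_pi_apply m (.of_discrete)

lemma antitone_staysIn (S : Set ℤ) : Antitone (staysIn S) :=
  fun _ _ hab _ hω m hm => hω m (hm.trans hab)

lemma setOf_forall_subset_staysIn (S : Set ℤ) (n : ℕ) : {ω | ∀ n, ω n ∈ S} ⊆ staysIn S n :=
  fun _ hω m _ => hω m

lemma iInter_staysIn (S : Set ℤ) : ⋂ n, staysIn S n = {ω | ∀ n, ω n ∈ S} := by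
  ext ω
  simp only [staysIn, Set.mem_iInter, Set.mem_ofPred_eq]
  exact ⟨fun h n => h n n le_rfl, fun h _ m _ => h m⟩

lemma staysIn_eq_iUnion (S : Set ℤ) (n : ℕ) :
    staysIn S n = ⋃ b : Fin (n + 1) → S, pathCylinder (Subtype.val ∘ b) := by
  ext ω
  simp only [staysIn, pathCylinder, Set.mem_iUnion, Set.mem_ofPred_eq, Function.comp_apply]
  constructor
  · intro h
    exact ⟨fun m => ⟨ω m, h m (Nat.lt_succ_iff.1 m.isLt)⟩, fun m => rfl⟩
  · rintro ⟨b, hb⟩ m hm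
    rw [show m = ((⟨m, Nat.lt_succ_of_le hm⟩ : Fin (n + 1)) : ℕ) from rfl, hb]
    exact (b _).2

lemma measure_staysIn_eq_tsum (ν : Measure (ℕ → ℤ)) (S : Set ℤ) (n : ℕ) :
    ν (staysIn S n) = ∑' b : Fin (n + 1) → S, ν (pathCylinder (Subtype.val ∘ b)) := by
  rw [staysIn_eq_iUnion]
  refine measure_iUnion (fun b b' hne => Set.disjoint_left.2 fun ω hb hb' => hne ?_)
    fun b => measurableSet_pathCylinder _
  exact funext fun m => Subtype.ext ((hb m).symm.trans (hb' m))

namespace IsMarkovLaw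

variable {P : ℤ → ℤ → ℝ} {μ : ℤ → Measure (ℕ → ℤ)}

lemma measure_pathCylinder (hμ : IsMarkovLaw P μ) (j : ℤ) {n : ℕ} (b : Fin (n + 1) → ℤ) :
    μ j (pathCylinder b) = ENNReal.ofReal ((if b 0 = j then 1 else 0) *
      ∏ m : Fin n, P (b m.castSucc) (b m.succ)) := by
  let f : ℕ → ℤ := fun m => if h : m < n + 1 then b ⟨m, h⟩ else 0
  have hf : ∀ m : Fin (n + 1), f m = b m := fun m => dif_pos m.isLt
  have hcyl : pathCylinder b = {ω | ∀ m ≤ n, ω m = f m} := by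
    ext ω
    refine ⟨fun h m hm => ?_, fun h m => ?_⟩
    · exact (h ⟨m, by omega⟩).trans (hf ⟨m, by omega⟩).symm
    · exact (h m (by omega)).trans (hf m)
  rw [hcyl, hμ, ← Fin.prod_univ_eq_prod_range (fun m => P (f m) (f (m + 1)))]
  have h0 : f 0 = b 0 := hf 0
  have hcs : ∀ m : Fin n, f m = b m.castSucc := fun m => hf m.castSucc
  have hs : ∀ m : Fin n, f (m + 1) = b m.succ := fun m => hf m.succ
  simp only [h0, hcs, hs]

lemma measure_pathCylinder_of_ne (hμ : IsMarkovLaw P μ) {j : ℤ} {n : ℕ} {b : Fin (n + 1) → ℤ}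
    (hb : b 0 ≠ j) : μ j (pathCylinder b) = 0 := by
  rw [hμ.measure_pathCylinder, if_neg hb, zero_mul, ENNReal.ofReal_zero]

lemma measure_pathCylinder_cons (hμ : IsMarkovLaw P μ) (hP : ∀ a b, 0 ≤ P a b) (a : ℤ) {n : ℕ}
    (t : Fin (n + 1) → ℤ) :
    μ a (pathCylinder (Fin.cons a t : Fin (n + 2) → ℤ)) =
      ENNReal.ofReal (P a (t 0)) * μ (t 0) (pathCylinder t) := by
  rw [hμ.measure_pathCylinder, hμ.measure_pathCylinder, Fin.prod_univ_succ]
  simp only [Fin.cons_zero, if_true, one_mul, Fin.castSucc_zero, Fin.cons_succ,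
    ← Fin.succ_castSucc]
  exact ENNReal.ofReal_mul (hP _ _)

lemma measure_staysIn_zero (hμ : IsMarkovLaw P μ) (S : Set ℤ) (j : ℤ) :
    μ j (staysIn S 0) = S.indicator 1 j := by
  rw [measure_staysIn_eq_tsum, ← (Equiv.funUnique (Fin 1) S).symm.tsum_eq,
    ← tsum_subtype_ite_eq]
  refine tsum_congr fun a => ?_
  rw [hμ.measure_pathCylinder]
  simp only [Finset.univ_eq_empty, Finset.prod_empty, mul_one]
  split_ifs <;> simp_all

lemma tsum_mul_measure_staysIn (hμ : IsMarkovLaw P μ) (S : Set ℤ) (n : ℕ) (g : ℤ → ℝ≥0∞) :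
    ∑' l, g l * μ l (staysIn S n) =
      ∑' t : Fin (n + 1) → S, g (t 0) * μ (t 0) (pathCylinder (Subtype.val ∘ t)) := by
  simp_rw [measure_staysIn_eq_tsum, ← ENNReal.tsum_mul_left]
  rw [ENNReal.tsum_comm]
  refine tsum_congr fun t => tsum_eq_single _ fun l hl => ?_
  rw [hμ.measure_pathCylinder_of_ne fun h => hl h.symm, mul_zero]

lemma measure_staysIn_succ (hμ : IsMarkovLaw P μ) (hP : ∀ a b, 0 ≤ P a b) (S : Set ℤ) (n : ℕ)
    (j : ℤ) :
    μ j (staysIn S (n + 1)) =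
      S.indicator (fun j => ∑' l, ENNReal.ofReal (P j l) * μ l (staysIn S n)) j := by
  have hcons : ∀ (a : S) (t : Fin (n + 1) → S),
      μ j (pathCylinder (Subtype.val ∘ Fin.cons a t)) =
        if (a : ℤ) = j then ENNReal.ofReal (P a (t 0)) * μ (t 0) (pathCylinder (Subtype.val ∘ t))
        else 0 := by
    intro a t
    rw [Fin.comp_cons]
    split_ifs with h
    · rw [← h, hμ.measure_pathCylinder_cons hP]; rfl
    · exact hμ.measure_pathCylinder_of_ne h
  rw [measure_staysIn_eq_tsum, ← (Fin.consEquiv fun _ => S).tsum_eq, ENNReal.tsum_prod',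
    ← tsum_subtype_ite_eq]
  refine tsum_congr fun a => ?_
  change ∑' t, μ j (pathCylinder (Subtype.val ∘ Fin.cons a t)) = _
  simp only [hcons]
  split_ifs
  · exact (hμ.tsum_mul_measure_staysIn S n fun l => ENNReal.ofReal (P a l)).symm
  · exact tsum_zero

lemma measure_staysIn_le_one (hμ : IsMarkovLaw P μ) (S : Set ℤ) (n : ℕ) (j : ℤ) :
    μ j (staysIn S n) ≤ 1 := by
  refine (measure_mono (antitone_staysIn S n.zero_le)).trans ?_
  rw [hμ.measure_staysIn_zero]
  exact Set.indicator_le_self' (fun _ _ => zero_le_one) j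

lemma measure_staysForever_le_one (hμ : IsMarkovLaw P μ) (S : Set ℤ) (j : ℤ) :
    μ j {ω | ∀ n, ω n ∈ S} ≤ 1 :=
  (measure_mono (setOf_forall_subset_staysIn S 0)).trans (hμ.measure_staysIn_le_one S 0 j)

lemma measure_staysForever_of_notMem (hμ : IsMarkovLaw P μ) {S : Set ℤ} {j : ℤ} (hj : j ∉ S) :
    μ j {ω | ∀ n, ω n ∈ S} = 0 := by
  refine measure_mono_null (setOf_forall_subset_staysIn S 0) ?_
  rw [hμ.measure_staysIn_zero, Set.indicator_of_notMem hj]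

lemma tendsto_measure_staysIn (hμ : IsMarkovLaw P μ) (S : Set ℤ) (j : ℤ) :
    Tendsto (fun n => μ j (staysIn S n)) atTop (𝓝 (μ j {ω | ∀ n, ω n ∈ S})) := by
  rw [← iInter_staysIn]
  exact tendsto_measure_iInter_atTop (fun n => (measurableSet_staysIn S n).nullMeasurableSet)
    (antitone_staysIn S)
    ⟨0, ne_top_of_le_ne_top ENNReal.one_ne_top (hμ.measure_staysIn_le_one S 0 j)⟩

end IsMarkovLaw

section BirthDeath

variable {p q : ℕ → ℝ}

lemma bdKernel_nonneg (hp : ∀ i, 0 ≤ p i) (hq : ∀ i, 0 ≤ q i) (a b : ℤ) :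
    0 ≤ bdKernel p q a b := by
  unfold bdKernel
  split_ifs <;> first | exact hp _ | exact hq _ | norm_num

lemma tsum_ofReal_bdKernel_mul {j : ℤ} (hj : 0 ≤ j) (V : ℤ → ℝ≥0∞) :
    ∑' l, ENNReal.ofReal (bdKernel p q j l) * V l =
      ENNReal.ofReal (p j.toNat) * V (j + 1) + ENNReal.ofReal (q j.toNat) * V (j - 1) := by
  have hsplit : ∀ l, ENNReal.ofReal (bdKernel p q j l) * V l =
      (if l = j + 1 then ENNReal.ofReal (p j.toNat) * V (j + 1) else 0) +
        (if l = j - 1 then ENNReal.ofReal (q j.toNat) * V (j - 1) else 0) := by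
    intro l
    simp only [bdKernel, if_pos hj]
    split_ifs <;> first | omega | simp_all
  simp_rw [hsplit]
  rw [ENNReal.tsum_add, tsum_ite_eq, tsum_ite_eq]

lemma tsum_ofReal_bdKernel_mul_of_neg {j : ℤ} (hj : j < 0) (V : ℤ → ℝ≥0∞) :
    ∑' l, ENNReal.ofReal (bdKernel p q j l) * V l = V j := by
  have hsplit : ∀ l, ENNReal.ofReal (bdKernel p q j l) * V l = if l = j then V j else 0 := by
    intro l
    simp only [bdKernel, if_neg hj.not_ge]
    split_ifs <;> simp_all
  simp_rw [hsplit]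
  exact tsum_ite_eq j _

variable (hp : ∀ i, 0 ≤ p i) (hq : ∀ i, 0 ≤ q i) {μ : ℤ → Measure (ℕ → ℤ)}
  (hμ : IsMarkovLaw (bdKernel p q) μ) {S : Set ℤ}
include hp hq hμ

lemma measure_staysIn_of_neg {j : ℤ} (hj : j < 0) (hjS : j ∈ S) (n : ℕ) :
    μ j (staysIn S n) = 1 := by
  induction n with
  | zero => rw [hμ.measure_staysIn_zero, Set.indicator_of_mem hjS, Pi.one_apply]
  | succ n ih =>
    rw [hμ.measure_staysIn_succ (bdKernel_nonneg hp hq), Set.indicator_of_mem hjS,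
      tsum_ofReal_bdKernel_mul_of_neg hj, ih]

lemma measure_staysIn_succ_of_nonneg {j : ℤ} (hj : 0 ≤ j) (hjS : j ∈ S) (n : ℕ) :
    μ j (staysIn S (n + 1)) = ENNReal.ofReal (p j.toNat) * μ (j + 1) (staysIn S n) +
      ENNReal.ofReal (q j.toNat) * μ (j - 1) (staysIn S n) := by
  rw [hμ.measure_staysIn_succ (bdKernel_nonneg hp hq), Set.indicator_of_mem hjS,
    tsum_ofReal_bdKernel_mul hj]

lemma measure_staysForever_of_neg {j : ℤ} (hj : j < 0) (hjS : j ∈ S) :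
    μ j {ω | ∀ n, ω n ∈ S} = 1 :=
  tendsto_nhds_unique (hμ.tendsto_measure_staysIn S j)
    (by simp only [measure_staysIn_of_neg hp hq hμ hj hjS, tendsto_const_nhds])

lemma measure_staysForever_of_nonneg {j : ℤ} (hj : 0 ≤ j) (hjS : j ∈ S) :
    μ j {ω | ∀ n, ω n ∈ S} = ENNReal.ofReal (p j.toNat) * μ (j + 1) {ω | ∀ n, ω n ∈ S} +
      ENNReal.ofReal (q j.toNat) * μ (j - 1) {ω | ∀ n, ω n ∈ S} := by
  refine tendsto_nhds_unique ((tendsto_add_atTop_iff_nat 1).2 (hμ.tendsto_measure_staysIn S j)) ?_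
  simp only [measure_staysIn_succ_of_nonneg hp hq hμ hj hjS]
  exact (ENNReal.Tendsto.const_mul (hμ.tendsto_measure_staysIn S _)
    (Or.inr ENNReal.ofReal_ne_top)).add (ENNReal.Tendsto.const_mul
      (hμ.tendsto_measure_staysIn S _) (Or.inr ENNReal.ofReal_ne_top))

lemma toReal_measure_staysForever_of_nonneg {j : ℤ} (hj : 0 ≤ j) (hjS : j ∈ S) :
    (μ j {ω | ∀ n, ω n ∈ S}).toReal = p j.toNat * (μ (j + 1) {ω | ∀ n, ω n ∈ S}).toReal +
      q j.toNat * (μ (j - 1) {ω | ∀ n, ω n ∈ S}).toReal := by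
  have hfin : ∀ l, ENNReal.ofReal (p j.toNat) * μ l {ω | ∀ n, ω n ∈ S} ≠ ⊤ ∧
      ENNReal.ofReal (q j.toNat) * μ l {ω | ∀ n, ω n ∈ S} ≠ ⊤ := fun l =>
    have h := ne_top_of_le_ne_top ENNReal.one_ne_top (hμ.measure_staysForever_le_one S l)
    ⟨ENNReal.mul_ne_top ENNReal.ofReal_ne_top h, ENNReal.mul_ne_top ENNReal.ofReal_ne_top h⟩
  rw [measure_staysForever_of_nonneg hp hq hμ hj hjS, ENNReal.toReal_add (hfin _).1 (hfin _).2,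
    ENNReal.toReal_mul, ENNReal.toReal_mul, ENNReal.toReal_ofReal (hp _),
    ENNReal.toReal_ofReal (hq _)]

end BirthDeath

section Harmonic

variable {p q : ℕ → ℝ} {k : ℕ} {u : ℤ → ℝ}

lemma sub_eq_cseq_mul_of_harmonic (hp : ∀ i, 0 < p i) (hpq : ∀ i, p i + q i = 1)
    (hu : ∀ j : ℕ, j ≤ k → u j = p j * u (j + 1) + q j * u (j - 1)) {j : ℕ} (hj : j ≤ k) :
    u (j + 1) - u j = cseq p q j * (u 0 - u (-1)) := by
  have step : ∀ j : ℕ, j ≤ k → u (j + 1) - u j = q j / p j * (u j - u (j - 1)) := by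
    intro j hj
    rw [div_mul_eq_mul_div, eq_div_iff (hp j).ne']
    linear_combination -(hu j hj) - u j * hpq j
  induction j with
  | zero => simpa [cseq] using step 0 hj
  | succ j ih =>
    rw [step (j + 1) hj, Nat.cast_succ, add_sub_cancel_right, ih (by omega),
      show cseq p q (j + 1) = cseq p q j * (q (j + 1) / p (j + 1)) from prod_range_succ _ _]
    ring

lemma eq_of_harmonic (hp : ∀ i, 0 < p i) (hq : ∀ i, 0 ≤ q i) (hpq : ∀ i, p i + q i = 1)
    (hu₀ : u (-1) = 1) (hu₁ : u (k + 1) = 0)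
    (hu : ∀ j : ℕ, j ≤ k → u j = p j * u (j + 1) + q j * u (j - 1)) {i : ℕ} (hi : i ≤ k) :
    u i = (∑ n ∈ Icc i k, cseq p q n) / (1 + ∑ n ∈ range (k + 1), cseq p q n) := by
  have hpartial : ∀ j ≤ k + 1, u j = 1 + (u 0 - 1) * (1 + ∑ n ∈ range j, cseq p q n) := by
    intro j hj
    induction j with
    | zero => simp
    | succ j ih =>
      rw [Nat.cast_succ, ← sub_add_cancel (u (j + 1)) (u j),
        sub_eq_cseq_mul_of_harmonic hp hpq hu (by omega), ih (by omega), hu₀, sum_range_succ]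
      ring
  have hS : 0 < 1 + ∑ n ∈ range (k + 1), cseq p q n :=
    add_pos_of_pos_of_nonneg one_pos
      (sum_nonneg fun n _ => prod_nonneg fun j _ => div_nonneg (hq j) (hp j).le)
  have hu0 : u 0 - 1 = -1 / (1 + ∑ n ∈ range (k + 1), cseq p q n) := by
    rw [eq_div_iff hS.ne']
    have := hpartial (k + 1) le_rfl
    push_cast at this
    linarith
  rw [hpartial i (by omega), hu0, ← Ico_add_one_right_eq_Icc, sum_Ico_eq_sub _ (by omega)]
  field_simp
  ring

end Harmonic

theorem stmt0_general (p q : ℕ → ℝ)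
    (hp : ∀ i, p i ∈ Set.Ioo (0 : ℝ) 1) (hq : ∀ i, q i ∈ Set.Ioo (0 : ℝ) 1)
    (hpq : ∀ i, p i + q i = 1)
    (μ : ℤ → Measure (ℕ → ℤ))
    (hlaw : IsBDLaw p q μ)
    (k : ℕ) (i : ℕ) (hik : i ≤ k) :
    μ i {ω : ℕ → ℤ | ∀ n : ℕ, ω n ≤ (k : ℤ)} =
      ENNReal.ofReal ((∑ n ∈ Finset.Icc i k, cseq p q n) /
        (1 + ∑ n ∈ Finset.range (k + 1), cseq p q n)) := by
  have hp₀ : ∀ i, 0 ≤ p i := fun i => (hp i).1.le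
  have hq₀ : ∀ i, 0 ≤ q i := fun i => (hq i).1.le
  have hμ : IsMarkovLaw (bdKernel p q) μ := hlaw
  let S := Set.Iic (k : ℤ)
  let u : ℤ → ℝ := fun j => (μ j {ω | ∀ n, ω n ∈ S}).toReal
  have hu₀ : u (-1) = 1 := by
    simp only [u]
    rw [measure_staysForever_of_neg hp₀ hq₀ hμ (by norm_num) (by simp [S]), ENNReal.toReal_one]
  have hu₁ : u (k + 1) = 0 := by
    simp only [u]
    rw [hμ.measure_staysForever_of_notMem (by simp [S]), ENNReal.toReal_zero]
  have hharm : ∀ j : ℕ, j ≤ k → u j = p j * u (j + 1) + q j * u (j - 1) := fun j hj => by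
    simpa using toReal_measure_staysForever_of_nonneg hp₀ hq₀ hμ (Int.natCast_nonneg j)
      (show (j : ℤ) ∈ S by simpa [S] using hj)
  have hfin : μ i {ω | ∀ n, ω n ∈ S} ≠ ⊤ :=
    ne_top_of_le_ne_top ENNReal.one_ne_top (hμ.measure_staysForever_le_one S i)
  change μ i {ω | ∀ n, ω n ∈ S} = _
  rw [← eq_of_harmonic (fun i => (hp i).1) hq₀ hpq hu₀ hu₁ hharm hik, ENNReal.ofReal_toReal hfin]

theorem stmt0 (p q : ℕ → ℝ)
    (hp : ∀ i, p i ∈ Set.Ioo (0 : ℝ) 1) (hq : ∀ i, q i ∈ Set.Ioo (0 : ℝ) 1)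
    (hpq : ∀ i, p i + q i = 1)
    (μ : ℤ → Measure (ℕ → ℤ)) (hμ : ∀ i, IsProbabilityMeasure (μ i))
    (hlaw : IsBDLaw p q μ)
    (k : ℕ) (hk : 1 ≤ k) (i : ℕ) (hik : i ≤ k) :
    μ i {ω : ℕ → ℤ | ∀ n : ℕ, ω n ≤ (k : ℤ)} =
      ENNReal.ofReal ((∑ n ∈ Finset.Icc i k, cseq p q n) /
        (1 + ∑ n ∈ Finset.range (k + 1), cseq p q n)) :=
  stmt0_general p q hp hq hpq μ hlaw k i hik
end

section
/- If ∑_{n=0}^{∞} c_n = ∞ (i.e. the series diverges), then for every integer i ≥ 0, absorption is almost sure: μ_i({ω ∈ ℤ^ℕ : ∃ n ∈ ℕ, ω_n = −1}) = 1. -/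
open MeasureTheory

/-!
Let `u j` be the probability of absorption from `j`. It is the increasing limit of the
probabilities `h n j` of absorption by time `n`, and conditioning on the first step gives
`h (n + 1) j = p_j h n (j + 1) + q_j h n (j - 1)` for `j ≥ 0`. Hence the survival probability
`f = 1 - u` is a bounded solution of `f k = p_k f (k + 1) + q_k f (k - 1)` with `f (-1) = 0`.
Its increments satisfy `f (k + 1) - f k = c_k f 0`, so `f N = f 0 (1 + c_0 + ⋯ + c_{N-1})`,
and as `∑ c_n = ∞` boundedness forces `f 0 = 0`, hence `f = 0`.
-/

open Filter Finset Topology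

namespace BirthDeath

variable {p q : ℕ → ℝ}

theorem cseq_succ (k : ℕ) : cseq p q (k + 1) = cseq p q k * (q (k + 1) / p (k + 1)) :=
  prod_range_succ _ _

theorem cseq_nonneg (hp : ∀ k, 0 ≤ p k) (hq : ∀ k, 0 ≤ q k) (k : ℕ) : 0 ≤ cseq p q k :=
  prod_nonneg fun j _ => div_nonneg (hq j) (hp j)

section Harmonic

variable {f : ℤ → ℝ}

theorem sub_eq_cseq_mul_of_harmonic (hp : ∀ k, p k ≠ 0) (hpq : ∀ k, p k + q k = 1)
    (hf : ∀ k : ℕ, f k = p k * f (k + 1) + q k * f (k - 1)) (h0 : f (-1) = 0) (k : ℕ) :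
    f (k + 1) - f k = cseq p q k * f 0 := by
  have step (k : ℕ) : p k * (f (k + 1) - f k) = q k * (f k - f (k - 1)) := by
    linear_combination (-1) * hf k - f k * hpq k
  induction k with
  | zero =>
    have h := step 0
    simp only [Nat.cast_zero, zero_add, zero_sub, h0, sub_zero] at h ⊢
    rw [cseq, prod_range_one]
    field_simp [hp 0]
    linear_combination h
  | succ k ih =>
    have h := step (k + 1)
    push_cast at h ⊢
    rw [add_sub_cancel_right, ih] at h
    rw [cseq_succ]
    field_simp [hp (k + 1)]
    linear_combination h

theorem harmonic_eq_mul_partial_sum (hp : ∀ k, p k ≠ 0) (hpq : ∀ k, p k + q k = 1)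
    (hf : ∀ k : ℕ, f k = p k * f (k + 1) + q k * f (k - 1)) (h0 : f (-1) = 0) (N : ℕ) :
    f N = f 0 * (1 + ∑ k ∈ range N, cseq p q k) := by
  induction N with
  | zero => simp
  | succ N ih =>
    push_cast
    rw [sum_range_succ]
    linear_combination sub_eq_cseq_mul_of_harmonic hp hpq hf h0 N + ih

theorem harmonic_eq_zero_of_not_summable (hp : ∀ k, 0 < p k) (hq : ∀ k, 0 ≤ q k)
    (hpq : ∀ k, p k + q k = 1) (hc : ¬ Summable (cseq p q))
    (hf : ∀ k : ℕ, f k = p k * f (k + 1) + q k * f (k - 1)) (h0 : f (-1) = 0)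
    (hbdd : ∃ C, ∀ k : ℕ, |f k| ≤ C) (k : ℕ) : f k = 0 := by
  have hp' : ∀ k, p k ≠ 0 := fun k => (hp k).ne'
  have hc_nonneg := cseq_nonneg (fun k => (hp k).le) hq
  have hf0 : f 0 = 0 := by
    by_contra hne
    obtain ⟨C, hC⟩ := hbdd
    have hsum : Tendsto (fun N => |f 0| * (1 + ∑ k ∈ range N, cseq p q k)) atTop atTop :=
      (tendsto_atTop_add_const_left _ 1
        ((not_summable_iff_tendsto_nat_atTop_of_nonneg hc_nonneg).mp hc)).const_mul_atTop
        (abs_pos.2 hne)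
    obtain ⟨N, hN⟩ := (hsum.eventually_gt_atTop C).exists
    have hpos : 0 ≤ 1 + ∑ k ∈ range N, cseq p q k :=
      add_nonneg zero_le_one (sum_nonneg fun k _ => hc_nonneg k)
    have := hC N
    rw [harmonic_eq_mul_partial_sum hp' hpq hf h0, abs_mul, abs_of_nonneg hpos] at this
    linarith
  rw [harmonic_eq_mul_partial_sum hp' hpq hf h0, hf0, zero_mul]

end Harmonic

-- Prefixes are tuples because `Fin (n + 1) → ℤ` is countable: the law of a prefix is then
-- a sum of point masses.
def pathPrefix (n : ℕ) (ω : ℕ → ℤ) : Fin (n + 1) → ℤ := fun m => ω m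

theorem measurable_pathPrefix (n : ℕ) : Measurable (pathPrefix n) :=
  measurable_pi_lambda _ fun m => measurable_pi_apply (m : ℕ)

noncomputable def pathWeight (p q : ℕ → ℝ) {n : ℕ} (i : ℤ) (g : Fin (n + 1) → ℤ) : ℝ :=
  (if g 0 = i then 1 else 0) * ∏ m : Fin n, bdKernel p q (g m.castSucc) (g m.succ)

section PathWeight

variable {n : ℕ}

theorem bdKernel_nonneg (hp : ∀ k, 0 ≤ p k) (hq : ∀ k, 0 ≤ q k) (i j : ℤ) :
    0 ≤ bdKernel p q i j := by
  unfold bdKernel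
  split_ifs <;> simp [hp, hq]

theorem pathWeight_nonneg (hp : ∀ k, 0 ≤ p k) (hq : ∀ k, 0 ≤ q k) (i : ℤ)
    (g : Fin (n + 1) → ℤ) : 0 ≤ pathWeight p q i g :=
  mul_nonneg (by split_ifs <;> norm_num)
    (prod_nonneg fun _ _ => bdKernel_nonneg hp hq _ _)

theorem pathWeight_eq_zero_of_ne {i : ℤ} {g : Fin (n + 1) → ℤ} (h : g 0 ≠ i) :
    pathWeight p q i g = 0 := by
  simp [pathWeight, h]

theorem pathWeight_cons (i x : ℤ) (g : Fin (n + 1) → ℤ) :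
    pathWeight p q i (Fin.cons x g : Fin (n + 2) → ℤ) =
      (if x = i then 1 else 0) * (bdKernel p q x (g 0) * pathWeight p q (g 0) g) := by
  simp [pathWeight, Fin.prod_univ_succ]

theorem bdKernel_mul_pathWeight (j : ℕ) (g : Fin (n + 1) → ℤ) :
    bdKernel p q j (g 0) * pathWeight p q (g 0) g =
      p j * pathWeight p q (j + 1) g + q j * pathWeight p q (j - 1) g := by
  by_cases h₁ : g 0 = j + 1
  · rw [pathWeight_eq_zero_of_ne (i := (j : ℤ) - 1) (by omega)]
    simp [bdKernel, h₁]
  by_cases h₂ : g 0 = j - 1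
  · rw [pathWeight_eq_zero_of_ne (i := (j : ℤ) + 1) (by omega)]
    simp [bdKernel, h₂, show (j : ℤ) - 1 ≠ j + 1 by omega]
  simp [bdKernel, h₁, h₂, pathWeight_eq_zero_of_ne]

end PathWeight

section Law

variable {μ : ℤ → Measure (ℕ → ℤ)} {n : ℕ}

theorem measure_pathPrefix_preimage_singleton (hlaw : IsBDLaw p q μ) (i : ℤ)
    (g : Fin (n + 1) → ℤ) :
    μ i (pathPrefix n ⁻¹' {g}) = ENNReal.ofReal (pathWeight p q i g) := by
  set f : ℕ → ℤ := fun m => if h : m < n + 1 then g ⟨m, h⟩ else 0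
  have hf (m : Fin (n + 1)) : f m = g m := dif_pos m.isLt
  have hset : pathPrefix n ⁻¹' {g} = {ω | ∀ m ≤ n, ω m = f m} := by
    ext ω
    simp only [Set.mem_preimage, Set.mem_singleton_iff, funext_iff, pathPrefix, Set.mem_ofPred_eq]
    exact ⟨fun h m hm => (h ⟨m, by omega⟩).trans (hf ⟨m, by omega⟩).symm,
      fun h m => (h m (by omega)).trans (hf m)⟩
  rw [hset, hlaw, pathWeight, ← hf 0, ← Fin.prod_univ_eq_prod_range]
  congr 3
  funext m
  exact congrArg₂ _ (hf m.castSucc) (hf m.succ)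

theorem measure_pathPrefix_preimage (hlaw : IsBDLaw p q μ) (i : ℤ)
    (S : Set (Fin (n + 1) → ℤ)) :
    μ i (pathPrefix n ⁻¹' S) =
      ∑' g, S.indicator (fun g => ENNReal.ofReal (pathWeight p q i g)) g := by
  rw [← Measure.map_apply (measurable_pathPrefix n) .of_discrete,
    ← Measure.tsum_indicator_apply_singleton _ _ .of_discrete]
  simp_rw [Measure.map_apply (measurable_pathPrefix n) .of_discrete,
    measure_pathPrefix_preimage_singleton hlaw]

-- The Markov property at time `0`: split off the first step of the path.
theorem measure_pathPrefix_succ_preimage (hp : ∀ k, 0 ≤ p k) (hq : ∀ k, 0 ≤ q k)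
    (hlaw : IsBDLaw p q μ) (j : ℕ) (S : Set (Fin (n + 2) → ℤ)) :
    μ j (pathPrefix (n + 1) ⁻¹' S) =
      ENNReal.ofReal (p j) * μ (j + 1) (pathPrefix n ⁻¹' {g | Fin.cons (j : ℤ) g ∈ S}) +
      ENNReal.ofReal (q j) * μ (j - 1) (pathPrefix n ⁻¹' {g | Fin.cons (j : ℤ) g ∈ S}) := by
  classical
  have hcons (x : ℤ) (g : Fin (n + 1) → ℤ) :
      (Fin.consEquiv fun _ => ℤ) (x, g) = Fin.cons x g := rfl
  simp only [measure_pathPrefix_preimage hlaw]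
  rw [← (Fin.consEquiv fun _ => ℤ).tsum_eq, ENNReal.tsum_prod']
  simp only [hcons]
  rw [tsum_eq_single (j : ℤ)]
  · rw [← ENNReal.tsum_mul_left, ← ENNReal.tsum_mul_left, ← ENNReal.tsum_add]
    refine tsum_congr fun g => ?_
    simp only [Set.indicator_apply, Set.mem_ofPred_eq, pathWeight_cons,
      ↓reduceIte, one_mul, bdKernel_mul_pathWeight]
    split_ifs
    · have hw := pathWeight_nonneg (n := n) hp hq
      rw [ENNReal.ofReal_add (mul_nonneg (hp j) (hw _ g)) (mul_nonneg (hq j) (hw _ g)),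
        ENNReal.ofReal_mul (hp j), ENNReal.ofReal_mul (hq j)]
    · simp
  · intro x hx
    simp [Set.indicator_apply, pathWeight_cons, hx]

def hitBy (n : ℕ) : Set (ℕ → ℤ) := {ω | ∃ m ≤ n, ω m = -1}

def absorbed : Set (ℕ → ℤ) := {ω | ∃ n, ω n = -1}

theorem hitBy_eq_preimage (n : ℕ) : hitBy n = pathPrefix n ⁻¹' {g | ∃ m, g m = -1} := by
  ext ω
  exact ⟨fun ⟨m, hm, h⟩ => ⟨⟨m, by omega⟩, h⟩, fun ⟨m, h⟩ => ⟨m, by omega, h⟩⟩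

theorem monotone_hitBy : Monotone hitBy :=
  fun _ _ hab _ ⟨m, hm, h⟩ => ⟨m, hm.trans hab, h⟩

theorem iUnion_hitBy : ⋃ n, hitBy n = absorbed := by
  ext ω
  simp only [hitBy, absorbed, Set.mem_iUnion, Set.mem_ofPred_eq]
  exact ⟨fun ⟨_, m, _, h⟩ => ⟨m, h⟩, fun ⟨m, h⟩ => ⟨m, m, le_rfl, h⟩⟩

theorem measure_hitBy_succ (hp : ∀ k, 0 ≤ p k) (hq : ∀ k, 0 ≤ q k) (hlaw : IsBDLaw p q μ)
    (j n : ℕ) :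
    μ j (hitBy (n + 1)) =
      ENNReal.ofReal (p j) * μ (j + 1) (hitBy n) +
      ENNReal.ofReal (q j) * μ (j - 1) (hitBy n) := by
  have hstart : {g : Fin (n + 1) → ℤ |
      (Fin.cons (j : ℤ) g : Fin (n + 2) → ℤ) ∈ {g | ∃ m, g m = -1}} = {g | ∃ m, g m = -1} := by
    ext g
    simp [Fin.exists_fin_succ, show (j : ℤ) ≠ -1 by omega]
  rw [hitBy_eq_preimage, measure_pathPrefix_succ_preimage hp hq hlaw, hstart,
    ← hitBy_eq_preimage]

theorem measure_absorbed_eq (hp : ∀ k, 0 ≤ p k) (hq : ∀ k, 0 ≤ q k) (hlaw : IsBDLaw p q μ)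
    (j : ℕ) :
    μ j absorbed =
      ENNReal.ofReal (p j) * μ (j + 1) absorbed + ENNReal.ofReal (q j) * μ (j - 1) absorbed := by
  have lim (i : ℤ) : Tendsto (fun n => μ i (hitBy n)) atTop (𝓝 (μ i absorbed)) := by
    rw [← iUnion_hitBy]
    exact tendsto_measure_iUnion_atTop monotone_hitBy
  refine tendsto_nhds_unique ((lim j).comp (tendsto_add_atTop_nat 1)) ?_
  simp only [Function.comp_def, measure_hitBy_succ hp hq hlaw]
  exact (ENNReal.Tendsto.const_mul (lim _) (Or.inr ENNReal.ofReal_ne_top)).add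
    (ENNReal.Tendsto.const_mul (lim _) (Or.inr ENNReal.ofReal_ne_top))

theorem measure_absorbed_of_neg_one (hlaw : IsBDLaw p q μ) [IsProbabilityMeasure (μ (-1))] :
    μ (-1) absorbed = 1 := by
  refine le_antisymm prob_le_one ?_
  calc 1 = μ (-1) {ω | ∀ m ≤ 0, ω m = (fun _ => (-1 : ℤ)) m} := by rw [hlaw (-1) 0]; simp
    _ ≤ _ := measure_mono (Set.ofPred_subset_ofPred.2 fun ω hω => ⟨0, hω 0 le_rfl⟩)

end Law

end BirthDeath

open BirthDeath in
theorem stmt2 (p q : ℕ → ℝ)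
    (hp : ∀ i, p i ∈ Set.Ioo (0 : ℝ) 1) (hq : ∀ i, q i ∈ Set.Ioo (0 : ℝ) 1)
    (hpq : ∀ i, p i + q i = 1)
    (μ : ℤ → Measure (ℕ → ℤ)) (hμ : ∀ i, IsProbabilityMeasure (μ i))
    (hlaw : IsBDLaw p q μ)
    (hc : ¬ Summable (cseq p q)) :
    ∀ i : ℕ, μ i {ω : ℕ → ℤ | ∃ n : ℕ, ω n = -1} = 1 := by
  intro i
  change μ i absorbed = 1
  set u : ℤ → ℝ := fun j => (μ j absorbed).toReal with hu
  have hp₀ (k : ℕ) : 0 ≤ p k := (hp k).1.le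
  have hq₀ (k : ℕ) : 0 ≤ q k := (hq k).1.le
  have hu_le (j : ℤ) : u j ≤ 1 :=
    ENNReal.toReal_le_of_le_ofReal zero_le_one (by simp [prob_le_one])
  have hu_eq (k : ℕ) : u k = p k * u (k + 1) + q k * u (k - 1) := by
    simp only [hu, measure_absorbed_eq hp₀ hq₀ hlaw k]
    rw [ENNReal.toReal_add (by finiteness) (by finiteness), ENNReal.toReal_mul,
      ENNReal.toReal_mul, ENNReal.toReal_ofReal (hp₀ k), ENNReal.toReal_ofReal (hq₀ k)]
  have hsurvival : ∀ k : ℕ, 1 - u k = 0 :=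
    harmonic_eq_zero_of_not_summable (f := fun j => 1 - u j) (fun k => (hp k).1) hq₀ hpq hc
      (fun k => by linear_combination (-1) * hu_eq k - hpq k)
      (by simp [hu, measure_absorbed_of_neg_one hlaw])
      ⟨1, fun k => abs_sub_le_of_nonneg_of_le zero_le_one le_rfl ENNReal.toReal_nonneg
        (hu_le k)⟩
  exact (ENNReal.toReal_eq_one_iff _).1 (by linarith [hsurvival i])
end

section
/- If the series ∑_{n=0}^{∞} b_n converges, then for every integer i ≥ 1, the probability that the reflecting birth–death chain started at i never reaches the state 0 is μ_i({ω ∈ ℕ^ℕ : ∀ n ∈ ℕ, ω_n ≠ 0}) = (∑_{n=0}^{i−1} b_n) / (∑_{n=0}^{∞} b_n). -/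
open MeasureTheory
open scoped ENNReal

/-- Transition probabilities of the reflecting birth-death chain on `ℕ`:
from `0` move to `1` with probability `1`; for `i ≥ 1`, move to `i+1` with
probability `p i` and to `i-1` with probability `q i`. -/
noncomputable def rfKernel (p q : ℕ → ℝ) : ℕ → ℕ → ℝ := fun i j =>
  if i = 0 then (if j = 1 then 1 else 0)
  else if j = i + 1 then p i else if j = i - 1 then q i else 0

/-- `μ i` is the law (on path space, obtained via Ionescu–Tulcea) of the reflecting
birth-death chain started at `i`, characterised by its finite-dimensional (cylinder)
distributions. -/
def IsRFLaw (p q : ℕ → ℝ) (μ : ℕ → Measure (ℕ → ℕ)) : Prop :=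
  ∀ (i n : ℕ) (f : ℕ → ℕ),
    μ i {ω : ℕ → ℕ | ∀ m ≤ n, ω m = f m} =
      ENNReal.ofReal ((if f 0 = i then (1 : ℝ) else 0) *
        ∏ m ∈ Finset.range n, rfKernel p q (f m) (f (m + 1)))

/-- `bseq p q n = ∏_{i=1}^{n} q_i / p_i` (so `bseq p q 0 = 1`). -/
noncomputable def bseq (p q : ℕ → ℝ) (n : ℕ) : ℝ :=
  ∏ i ∈ Finset.Icc 1 n, q i / p i

/-!
Let `S_j = b_0 + ⋯ + b_{j-1}` and `h(j) = S_j / ∑ b_n`. Then `h(0) = 0`, and the relation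
`p_j b_j = q_j b_{j-1}` makes `h` harmonic for the chain at every `j ≥ 1`. Hence, if `G_n` is the
law at time `n` of the chain killed on hitting `0`, `∑_j h(j) G_n(j) = h(i)` for every `n`.
Each single mass `G_n(j)` tends to `0`: the probability of being killed exactly at time `n + 1`
does (survival probabilities decrease to a limit), and from `j + 1` the chain steps down to `j`
with probability `q_{j+1} > 0`. As `h(j) → 1`, the survival probability up to time `n`, which is
`∑_j G_n(j) = h(i) + ∑_j (1 - h(j)) G_n(j)`, therefore tends to `h(i)`.
-/

namespace ReflectingBirthDeath

open Finset Filter Topology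

lemma tendsto_tsum_mul_of_tendsto_cofinite {ι α : Type*} {l : Filter ι} {f : α → ℝ≥0∞}
    {G : ι → α → ℝ≥0∞} {C : ℝ≥0∞} (hf : Tendsto f cofinite (𝓝 0)) (hf_top : ∀ a, f a ≠ ∞)
    (hC : C ≠ ∞) (hG : ∀ i, ∑' a, G i a ≤ C) (hGa : ∀ a, Tendsto (G · a) l (𝓝 0)) :
    Tendsto (fun i => ∑' a, f a * G i a) l (𝓝 0) := by
  refine ENNReal.tendsto_nhds_zero.2 fun ε hε => ?_
  obtain ⟨δ, hδ, hδC⟩ := ENNReal.exists_pos_mul_lt hC hε.ne'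
  have hF : {a | ¬f a < δ}.Finite := eventually_cofinite.1 (hf.eventually (gt_mem_nhds hδ))
  set F := hF.toFinset
  have hsplit : ∀ i, ∑' a, f a * G i a ≤ ∑ a ∈ F, f a * G i a + δ * C := by
    intro i
    calc ∑' a, f a * G i a
        ≤ ∑' a, ((F : Set α).indicator (fun a => f a * G i a) a + δ * G i a) := by
          refine ENNReal.tsum_le_tsum fun a => ?_
          by_cases ha : a ∈ F
          · simp [ha]
          · have hfa : f a < δ := by simpa [F] using ha
            simpa [ha] using mul_le_mul_left hfa.le (G i a)
      _ ≤ ∑ a ∈ F, f a * G i a + δ * C := by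
          rw [ENNReal.tsum_add, ENNReal.tsum_mul_left, ← sum_eq_tsum_indicator]
          gcongr
          exact hG i
  have hfin : Tendsto (fun i => ∑ a ∈ F, f a * G i a) l (𝓝 0) := by
    simpa using tendsto_finsetSum F fun a _ => ENNReal.Tendsto.const_mul (hGa a) (.inr (hf_top a))
  filter_upwards [hfin.eventually (gt_mem_nhds (tsub_pos_of_lt hδC))] with i hi
  exact (hsplit i).trans (lt_tsub_iff_right.1 hi).le

section MeasureLemmas

variable {α β : Type*} [MeasurableSpace α] [MeasurableSpace β] [Countable β]
  [MeasurableSingletonClass β]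

lemma tsum_measure_preimage_singleton_inter (μ : Measure α) {f : α → β} (hf : Measurable f)
    (S : Set β) (E : Set α) :
    ∑' b : S, μ (f ⁻¹' {↑b} ∩ E) = μ (f ⁻¹' S ∩ E) := by
  have hmeas : ∀ T : Set β, MeasurableSet (f ⁻¹' T) := fun T => hf T.to_countable.measurableSet
  simpa only [Measure.restrict_apply (hmeas _)] using
    tsum_measure_preimage_singleton (μ := μ.restrict E) S.to_countable fun b _ => hmeas {b}

lemma measure_eq_tsum_preimage_singleton_inter (μ : Measure α) {f : α → β} (hf : Measurable f)
    (E : Set α) : μ E = ∑' b, μ (f ⁻¹' {b} ∩ E) := by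
  rw [← tsum_univ, tsum_measure_preimage_singleton_inter μ hf, Set.preimage_univ, Set.univ_inter]

end MeasureLemmas

variable {p q : ℕ → ℝ} {μ : ℕ → Measure (ℕ → ℕ)}

lemma rfKernel_nonneg (hp : ∀ i, 1 ≤ i → 0 ≤ p i) (hq : ∀ i, 1 ≤ i → 0 ≤ q i) (a b : ℕ) :
    0 ≤ rfKernel p q a b := by
  unfold rfKernel
  split_ifs <;> first | exact hp a (by omega) | exact hq a (by omega) | norm_num

lemma rfKernel_succ_self (k : ℕ) : rfKernel p q (k + 1) k = q (k + 1) := by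
  simp [rfKernel, show k ≠ k + 1 + 1 by omega]

lemma rfKernel_succ_succ (k : ℕ) : rfKernel p q (k + 1) (k + 2) = p (k + 1) := by
  simp [rfKernel]

lemma measure_cylinder_succ (hκ : ∀ a b, 0 ≤ rfKernel p q a b) (hlaw : IsRFLaw p q μ)
    (i n : ℕ) (f : ℕ → ℕ) :
    μ i {ω | ∀ m ≤ n + 1, ω m = f m} =
      μ i {ω | ∀ m ≤ n, ω m = f m} * ENNReal.ofReal (rfKernel p q (f n) (f (n + 1))) := by
  have hweight : 0 ≤ (if f 0 = i then (1 : ℝ) else 0) *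
      ∏ m ∈ range n, rfKernel p q (f m) (f (m + 1)) :=
    mul_nonneg (by split_ifs <;> norm_num) (prod_nonneg fun m _ => hκ _ _)
  rw [hlaw, hlaw, prod_range_succ, ← mul_assoc, ENNReal.ofReal_mul hweight]

/-- One-step Markov property, for an event `P` determined by the path up to time `n`. -/
lemma measure_inter_eval_succ (hκ : ∀ a b, 0 ≤ rfKernel p q a b) (hlaw : IsRFLaw p q μ)
    (i n k j : ℕ) {P : Set (ℕ → ℕ)}
    (hP : ∀ ω ∈ P, ∀ ω' : ℕ → ℕ, (∀ m ≤ n, ω' m = ω m) → ω' ∈ P) (hPk : ∀ ω ∈ P, ω n = k) :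
    μ i (P ∩ {ω | ω (n + 1) = j}) = μ i P * ENNReal.ofReal (rfKernel p q k j) := by
  set r := Preorder.frestrictLe (π := fun _ : ℕ => ℕ) n
  have hr : Measurable r := Preorder.measurable_frestrictLe n
  have hcyl : ∀ ω, r ⁻¹' {r ω} = {ω' | ∀ m ≤ n, ω' m = ω m} := by
    intro ω; ext ω'; simp [r, funext_iff]
  have hPr : P = r ⁻¹' (r '' P) := by
    refine (Set.subset_preimage_image r P).antisymm ?_
    rintro ω ⟨ω', hω', hr⟩
    exact hP ω' hω' ω (by simpa [hcyl] using (show ω ∈ r ⁻¹' {r ω'} from hr.symm))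
  rw [hPr, ← tsum_measure_preimage_singleton_inter (μ i) hr,
    ← tsum_measure_preimage_singleton (r '' P).to_countable fun g _ =>
      hr (measurableSet_singleton g),
    ← ENNReal.tsum_mul_right]
  refine tsum_congr ?_
  rintro ⟨_, ω, hω, rfl⟩
  have hstep := measure_cylinder_succ hκ hlaw i n (Function.update ω (n + 1) j)
  simp only [hcyl]
  convert hstep using 3
  · ext ω'
    simp only [Set.mem_inter_iff, Set.mem_ofPred_eq]
    constructor
    · rintro ⟨hpast, hnext⟩ m hm
      rcases Nat.of_le_succ hm with hm | rfl
      · rw [Function.update_of_ne (by omega)]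
        exact hpast m hm
      · rwa [Function.update_self]
    · intro h
      refine ⟨fun m hm => ?_, by simpa using h (n + 1) le_rfl⟩
      rw [h m (by omega), Function.update_of_ne (by omega)]
  · ext ω'
    refine forall₂_congr fun m hm => ?_
    rw [Function.update_of_ne (by omega)]
  · rw [Function.update_self, Function.update_of_ne (by omega), hPk ω hω]

def survivesUpTo (n : ℕ) : Set (ℕ → ℕ) := {ω | ∀ m ≤ n, ω m ≠ 0}

/-- The law at time `n` of the chain killed on hitting `0`. -/
def killedDist (ν : Measure (ℕ → ℕ)) (n j : ℕ) : ℝ≥0∞ := ν ({ω | ω n = j} ∩ survivesUpTo n)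

lemma survivesUpTo_succ (n : ℕ) :
    survivesUpTo (n + 1) = survivesUpTo n ∩ {ω | ω (n + 1) ≠ 0} := by
  ext ω
  simp only [survivesUpTo, Set.mem_inter_iff, Set.mem_ofPred_eq]
  refine ⟨fun h => ⟨fun m hm => h m (by omega), h (n + 1) le_rfl⟩, fun ⟨h, hn⟩ m hm => ?_⟩
  rcases Nat.of_le_succ hm with hm | rfl
  exacts [h m hm, hn]

lemma measurableSet_survivesUpTo (n : ℕ) : MeasurableSet (survivesUpTo n) := by
  simp only [survivesUpTo, Set.ofPred_forall]
  exact .biInter (Set.to_countable _) fun m _ =>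
    (measurable_pi_apply m) (measurableSet_singleton 0).compl

lemma survivesUpTo_antitone : Antitone survivesUpTo :=
  fun _ _ hab _ hω m hm => hω m (hm.trans hab)

lemma tendsto_measure_survivesUpTo (ν : Measure (ℕ → ℕ)) [IsFiniteMeasure ν] :
    Tendsto (fun n => ν (survivesUpTo n)) atTop (𝓝 (ν {ω | ∀ n, ω n ≠ 0})) := by
  have hinter : ⋂ n, survivesUpTo n = {ω | ∀ n, ω n ≠ 0} := by
    ext ω
    simpa [survivesUpTo] using ⟨fun h n => h n n le_rfl, fun h _ m _ => h m⟩
  rw [← hinter]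
  exact tendsto_measure_iInter_atTop (fun n => (measurableSet_survivesUpTo n).nullMeasurableSet)
    survivesUpTo_antitone ⟨0, measure_ne_top _ _⟩

lemma tendsto_measure_survivesUpTo_inter_eval_succ_eq_zero (ν : Measure (ℕ → ℕ))
    [IsFiniteMeasure ν] :
    Tendsto (fun n => ν (survivesUpTo n ∩ {ω | ω (n + 1) = 0})) atTop (𝓝 0) := by
  have hdiff : ∀ n, ν (survivesUpTo n ∩ {ω | ω (n + 1) = 0}) =
      ν (survivesUpTo n) - ν (survivesUpTo (n + 1)) := by
    intro n
    rw [← measure_sdiff (survivesUpTo_antitone n.le_succ)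
      (measurableSet_survivesUpTo _).nullMeasurableSet (measure_ne_top _ _), survivesUpTo_succ]
    congr 1
    ext ω
    simp only [Set.mem_inter_iff, Set.mem_sdiff, Set.mem_ofPred_eq]
    tauto
  have hlim := tendsto_measure_survivesUpTo ν
  simpa [hdiff] using
    ENNReal.Tendsto.sub hlim ((tendsto_add_atTop_iff_nat 1).2 hlim) (.inl (measure_ne_top _ _))

lemma killedDist_zero_right (ν : Measure (ℕ → ℕ)) (n : ℕ) : killedDist ν n 0 = 0 := by
  have hempty : {ω : ℕ → ℕ | ω n = 0} ∩ survivesUpTo n = ∅ :=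
    Set.eq_empty_of_forall_notMem fun ω ⟨h0, hω⟩ => hω n le_rfl h0
  simp [killedDist, hempty]

lemma tsum_killedDist (ν : Measure (ℕ → ℕ)) (n : ℕ) :
    ∑' j, killedDist ν n j = ν (survivesUpTo n) :=
  (measure_eq_tsum_preimage_singleton_inter ν (measurable_pi_apply n) _).symm

lemma killedDist_zero_left (hlaw : IsRFLaw p q μ) {i : ℕ} (hi : i ≠ 0) (j : ℕ) :
    killedDist (μ i) 0 j = if j = i then 1 else 0 := by
  rcases eq_or_ne j 0 with rfl | hj
  · simp [killedDist_zero_right, Ne.symm hi]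
  · have hset : {ω : ℕ → ℕ | ω 0 = j} ∩ survivesUpTo 0 = {ω | ∀ m ≤ 0, ω m = (fun _ => j) m} := by
      ext ω
      simp only [survivesUpTo, Set.mem_inter_iff, Set.mem_ofPred_eq, Nat.le_zero, forall_eq]
      exact ⟨fun h => h.1, fun h => ⟨h, h ▸ hj⟩⟩
    rw [killedDist, hset, hlaw]
    split_ifs <;> simp

lemma measure_survivesUpTo_inter_eval_succ (hκ : ∀ a b, 0 ≤ rfKernel p q a b)
    (hlaw : IsRFLaw p q μ) (i n j : ℕ) :
    μ i (survivesUpTo n ∩ {ω | ω (n + 1) = j}) =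
      ∑' k, killedDist (μ i) n k * ENNReal.ofReal (rfKernel p q k j) := by
  rw [measure_eq_tsum_preimage_singleton_inter (μ i) (measurable_pi_apply n)]
  refine tsum_congr fun k => ?_
  rw [← Set.inter_assoc]
  exact measure_inter_eval_succ hκ hlaw i n k j
    (fun ω hω ω' h => ⟨(h n le_rfl).trans hω.1, fun m hm => h m hm ▸ hω.2 m hm⟩)
    fun ω hω => hω.1

lemma killedDist_succ (ν : Measure (ℕ → ℕ)) (n : ℕ) {j : ℕ} (hj : j ≠ 0) :
    killedDist ν (n + 1) j = ν (survivesUpTo n ∩ {ω | ω (n + 1) = j}) := by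
  rw [killedDist, survivesUpTo_succ, Set.inter_comm, Set.inter_assoc]
  congr 2
  ext ω
  simp only [Set.mem_inter_iff, Set.mem_ofPred_eq]
  exact ⟨And.right, fun h => ⟨h ▸ hj, h⟩⟩


lemma killedDist_succ_mul_le (hκ : ∀ a b, 0 ≤ rfKernel p q a b) (hlaw : IsRFLaw p q μ)
    (i n j : ℕ) :
    killedDist (μ i) n (j + 1) * ENNReal.ofReal (q (j + 1)) ≤
      μ i (survivesUpTo n ∩ {ω | ω (n + 1) = j}) := by
  rw [measure_survivesUpTo_inter_eval_succ hκ hlaw, ← rfKernel_succ_self (p := p) (q := q)]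
  exact ENNReal.le_tsum (j + 1)

lemma tendsto_killedDist (hq : ∀ i, 1 ≤ i → 0 < q i) (hκ : ∀ a b, 0 ≤ rfKernel p q a b)
    (hlaw : IsRFLaw p q μ) (i : ℕ) [IsFiniteMeasure (μ i)] (j : ℕ) :
    Tendsto (fun n => killedDist (μ i) n j) atTop (𝓝 0) := by
  -- From `j + 1` the chain steps to `j` with probability `q (j + 1) > 0`.
  have hdown : ∀ j, Tendsto (fun n => μ i (survivesUpTo n ∩ {ω | ω (n + 1) = j})) atTop (𝓝 0) →
      Tendsto (fun n => killedDist (μ i) n (j + 1)) atTop (𝓝 0) := by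
    intro j hj
    have hqj : ENNReal.ofReal (q (j + 1)) ≠ 0 := by simpa using hq (j + 1) (by omega)
    have hlim := ENNReal.Tendsto.div_const hj (.inr hqj)
    rw [ENNReal.zero_div] at hlim
    refine tendsto_of_tendsto_of_tendsto_of_le_of_le tendsto_const_nhds hlim (fun _ => bot_le)
      fun n => ?_
    exact (ENNReal.le_div_iff_mul_le (.inl hqj) (.inl ENNReal.ofReal_ne_top)).2
      (killedDist_succ_mul_le hκ hlaw i n j)
  have hsucc : ∀ j, Tendsto (fun n => killedDist (μ i) n (j + 1)) atTop (𝓝 0) := by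
    intro j
    induction j with
    | zero => exact hdown 0 (tendsto_measure_survivesUpTo_inter_eval_succ_eq_zero (μ i))
    | succ j ih =>
      refine hdown (j + 1) ?_
      simp_rw [← killedDist_succ (μ i) _ j.succ_ne_zero]
      exact (tendsto_add_atTop_iff_nat 1).2 ih
  rcases j with _ | j
  · simp [killedDist_zero_right]
  · exact hsucc j

lemma bseq_nonneg (hp : ∀ i, 1 ≤ i → 0 ≤ p i) (hq : ∀ i, 1 ≤ i → 0 ≤ q i) (n : ℕ) :
    0 ≤ bseq p q n :=
  prod_nonneg fun i hi => div_nonneg (hq i (mem_Icc.1 hi).1) (hp i (mem_Icc.1 hi).1)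

lemma p_mul_bseq_succ {k : ℕ} (hp : p (k + 1) ≠ 0) :
    p (k + 1) * bseq p q (k + 1) = q (k + 1) * bseq p q k := by
  rw [bseq, prod_Icc_succ_top (by omega), ← bseq]
  field_simp

lemma sum_range_bseq_harmonic {k : ℕ} (hp : p (k + 1) ≠ 0) (hpq : p (k + 1) + q (k + 1) = 1) :
    q (k + 1) * ∑ n ∈ range k, bseq p q n + p (k + 1) * ∑ n ∈ range (k + 2), bseq p q n =
      ∑ n ∈ range (k + 1), bseq p q n := by
  rw [sum_range_succ _ (k + 1), sum_range_succ _ k]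
  linear_combination (∑ n ∈ range k, bseq p q n + bseq p q k) * hpq + p_mul_bseq_succ hp

noncomputable def escapeProb (p q : ℕ → ℝ) (j : ℕ) : ℝ≥0∞ :=
  ENNReal.ofReal ((∑ n ∈ range j, bseq p q n) / ∑' n, bseq p q n)

lemma escapeProb_zero : escapeProb p q 0 = 0 := by
  simp [escapeProb]

lemma escapeProb_le_one (hp : ∀ i, 1 ≤ i → 0 ≤ p i) (hq : ∀ i, 1 ≤ i → 0 ≤ q i)
    (hb : Summable (bseq p q)) (j : ℕ) : escapeProb p q j ≤ 1 :=
  ENNReal.ofReal_le_one.2 <| div_le_one_of_le₀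
    (hb.sum_le_tsum _ fun n _ => bseq_nonneg hp hq n) (tsum_nonneg (bseq_nonneg hp hq))

lemma tendsto_escapeProb (hp : ∀ i, 1 ≤ i → 0 ≤ p i) (hq : ∀ i, 1 ≤ i → 0 ≤ q i)
    (hb : Summable (bseq p q)) : Tendsto (escapeProb p q) atTop (𝓝 1) := by
  have hS : ∑' n, bseq p q n ≠ 0 :=
    (hb.tsum_pos (bseq_nonneg hp hq) 0 (by simp [bseq])).ne'
  have hlim := ENNReal.tendsto_ofReal (hb.hasSum.tendsto_sum_nat.div_const (∑' n, bseq p q n))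
  rwa [div_self hS, ENNReal.ofReal_one] at hlim

lemma tsum_escapeProb_mul_rfKernel (hp : ∀ i, 1 ≤ i → 0 < p i) (hq : ∀ i, 1 ≤ i → 0 ≤ q i)
    (hpq : ∀ i, 1 ≤ i → p i + q i = 1) (k : ℕ) :
    ∑' j, escapeProb p q j * ENNReal.ofReal (rfKernel p q (k + 1) j) = escapeProb p q (k + 1) := by
  have hh : ∀ j, 0 ≤ (∑ n ∈ range j, bseq p q n) / ∑' n, bseq p q n := fun j =>
    div_nonneg (sum_nonneg fun n _ => bseq_nonneg (fun i hi => (hp i hi).le) hq n)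
      (tsum_nonneg (bseq_nonneg (fun i hi => (hp i hi).le) hq))
  rw [tsum_eq_sum (s := {k, k + 2}) ?_, sum_pair (by omega), rfKernel_succ_self,
    rfKernel_succ_succ, escapeProb, escapeProb, escapeProb, ← ENNReal.ofReal_mul (hh _),
    ← ENNReal.ofReal_mul (hh _), ← ENNReal.ofReal_add (mul_nonneg (hh _) (hq _ (by omega)))
      (mul_nonneg (hh _) (hp _ (by omega)).le), div_mul_eq_mul_div, div_mul_eq_mul_div, ← add_div]
  · congr 2
    linear_combination sum_range_bseq_harmonic (hp (k + 1) (by omega)).ne' (hpq (k + 1) (by omega))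
  · intro j hj
    simp only [mem_insert, mem_singleton, not_or] at hj
    simp [rfKernel, show j ≠ k + 1 + 1 by omega, show j ≠ k by omega]

lemma tsum_escapeProb_mul_killedDist (hp : ∀ i, 1 ≤ i → 0 < p i) (hq : ∀ i, 1 ≤ i → 0 ≤ q i)
    (hpq : ∀ i, 1 ≤ i → p i + q i = 1) (hκ : ∀ a b, 0 ≤ rfKernel p q a b)
    (hlaw : IsRFLaw p q μ) {i : ℕ} (hi : i ≠ 0) (n : ℕ) :
    ∑' j, escapeProb p q j * killedDist (μ i) n j = escapeProb p q i := by
  induction n with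
  | zero => simp [killedDist_zero_left hlaw hi]
  | succ n ih =>
    calc ∑' j, escapeProb p q j * killedDist (μ i) (n + 1) j
        = ∑' j, escapeProb p q j *
            ∑' k, killedDist (μ i) n k * ENNReal.ofReal (rfKernel p q k j) := by
          refine tsum_congr fun j => ?_
          rcases eq_or_ne j 0 with rfl | hj
          · simp [escapeProb_zero]
          · rw [killedDist_succ _ _ hj, measure_survivesUpTo_inter_eval_succ hκ hlaw]
      _ = ∑' k, killedDist (μ i) n k *
            ∑' j, escapeProb p q j * ENNReal.ofReal (rfKernel p q k j) := by
          simp_rw [← ENNReal.tsum_mul_left]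
          rw [ENNReal.tsum_comm]
          exact tsum_congr fun k => tsum_congr fun j => by ring
      _ = ∑' k, escapeProb p q k * killedDist (μ i) n k := by
          refine tsum_congr fun k => ?_
          rcases k with _ | k
          · simp [killedDist_zero_right]
          · rw [tsum_escapeProb_mul_rfKernel hp hq hpq, mul_comm]
      _ = escapeProb p q i := ih

lemma measure_survivesUpTo_eq (hp : ∀ i, 1 ≤ i → 0 < p i) (hq : ∀ i, 1 ≤ i → 0 ≤ q i)
    (hpq : ∀ i, 1 ≤ i → p i + q i = 1) (hκ : ∀ a b, 0 ≤ rfKernel p q a b)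
    (hlaw : IsRFLaw p q μ) (hb : Summable (bseq p q)) {i : ℕ} (hi : i ≠ 0) (n : ℕ) :
    μ i (survivesUpTo n) =
      escapeProb p q i + ∑' j, (1 - escapeProb p q j) * killedDist (μ i) n j := by
  rw [← tsum_killedDist, ← tsum_escapeProb_mul_killedDist hp hq hpq hκ hlaw hi n,
    ← ENNReal.tsum_add]
  refine tsum_congr fun j => ?_
  rw [← add_mul, add_tsub_cancel_of_le (escapeProb_le_one (fun i hi => (hp i hi).le) hq hb j),
    one_mul]

end ReflectingBirthDeath

open ReflectingBirthDeath Filter Topology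

theorem stmt5_general (p q : ℕ → ℝ)
    (hp : ∀ i, 1 ≤ i → p i ∈ Set.Ioo (0 : ℝ) 1) (hq : ∀ i, 1 ≤ i → q i ∈ Set.Ioo (0 : ℝ) 1)
    (hpq : ∀ i, 1 ≤ i → p i + q i = 1)
    (μ : ℕ → Measure (ℕ → ℕ)) (hμ : ∀ i, IsProbabilityMeasure (μ i))
    (hlaw : IsRFLaw p q μ)
    (hb : Summable (bseq p q)) :
    ∀ i : ℕ, 1 ≤ i →
      μ i {ω : ℕ → ℕ | ∀ n : ℕ, ω n ≠ 0} =
        ENNReal.ofReal ((∑ n ∈ Finset.range i, bseq p q n) / (∑' n : ℕ, bseq p q n)) := by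
  intro i hi
  have hp' : ∀ i, 1 ≤ i → 0 < p i := fun i hi => (hp i hi).1
  have hq' : ∀ i, 1 ≤ i → 0 < q i := fun i hi => (hq i hi).1
  have hκ := rfKernel_nonneg (fun i hi => (hp' i hi).le) (fun i hi => (hq' i hi).le)
  have hrest : Tendsto (fun n => ∑' j, (1 - escapeProb p q j) * killedDist (μ i) n j) atTop
      (𝓝 0) := by
    refine tendsto_tsum_mul_of_tendsto_cofinite (C := 1) ?_ (fun j => ENNReal.sub_ne_top
      ENNReal.one_ne_top) ENNReal.one_ne_top (fun n => ?_) (tendsto_killedDist hq' hκ hlaw i)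
    · rw [Nat.cofinite_eq_atTop]
      simpa using ENNReal.Tendsto.sub tendsto_const_nhds (tendsto_escapeProb
        (fun i hi => (hp' i hi).le) (fun i hi => (hq' i hi).le) hb) (.inl ENNReal.one_ne_top)
    · rw [tsum_killedDist]
      exact prob_le_one
  have hlim : Tendsto (fun n => μ i (survivesUpTo n)) atTop (𝓝 (escapeProb p q i)) := by
    simp_rw [measure_survivesUpTo_eq hp' (fun i hi => (hq' i hi).le) hpq hκ hlaw hb
      (Nat.one_le_iff_ne_zero.1 hi)]
    simpa using tendsto_const_nhds.add hrest
  exact tendsto_nhds_unique (tendsto_measure_survivesUpTo (μ i)) hlim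

theorem stmt5 (p q : ℕ → ℝ)
    (hp : ∀ i, 1 ≤ i → p i ∈ Set.Ioo (0 : ℝ) 1) (hq : ∀ i, 1 ≤ i → q i ∈ Set.Ioo (0 : ℝ) 1)
    (hpq : ∀ i, 1 ≤ i → p i + q i = 1) (hp0 : p 0 = 1)
    (μ : ℕ → Measure (ℕ → ℕ)) (hμ : ∀ i, IsProbabilityMeasure (μ i))
    (hlaw : IsRFLaw p q μ)
    (hb : Summable (bseq p q)) :
    ∀ i : ℕ, 1 ≤ i →
      μ i {ω : ℕ → ℕ | ∀ n : ℕ, ω n ≠ 0} =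
        ENNReal.ofReal ((∑ n ∈ Finset.range i, bseq p q n) / (∑' n : ℕ, bseq p q n)) :=
  stmt5_general p q hp hq hpq μ hμ hlaw hb
end

section
/- If ∑_{n=1}^{∞} b_n = ∞ (i.e. the series diverges), then the reflecting birth–death chain is recurrent: for every starting state i ∈ ℕ and every state j ∈ ℕ, μ_i-almost surely the set {n ∈ ℕ : ω_n = j} is infinite. -/
open MeasureTheory
open scoped ENNReal

/-!
Let `u_M(x)` be the probability that the chain started at `x` avoids `j` at times `1, …, M`. It
decreases in `M` to a limit `L` with `L = P (L · 1_{≠ j})`, so `h = L · 1_{≠ j}` is bounded and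
harmonic off `j`. At a harmonic point `x ≥ 1` the increments satisfy
`p_x (h(x+1) - h(x)) = q_x (h(x) - h(x-1))`: reflection at `0` makes them vanish below `j`, while
above `j` they are proportional to `b_x`, so boundedness and `∑ b_n = ∞` force them to vanish too.
Hence `h = h(j) = 0` and `L = P h = 0`. By the Markov property, read off the cylinder formula, the
probability of avoiding `j` after time `N` along a fixed initial segment is at most `u_M(ω_N) → 0`,
and there are only countably many initial segments and times `N`.
-/

open Filter Function Topology

section Kernel

variable {p q : ℕ → ℝ}

lemma rfKernel_self_add_one (x : ℕ) :
    rfKernel p q x (x + 1) = if x = 0 then 1 else p x := by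
  rcases eq_or_ne x 0 with rfl | hx <;> simp [rfKernel, *]

lemma rfKernel_self_sub_one (x : ℕ) :
    rfKernel p q x (x - 1) = if x = 0 then 0 else q x := by
  rcases eq_or_ne x 0 with rfl | hx
  · simp [rfKernel]
  · simp [rfKernel, hx, show x - 1 ≠ x + 1 by omega]

lemma rfKernel_eq_zero {x y : ℕ} (h₁ : y ≠ x + 1) (h₂ : y ≠ x - 1) :
    rfKernel p q x y = 0 := by
  rcases eq_or_ne x 0 with rfl | hx
  · simp_all [rfKernel]
  · simp [rfKernel, hx, h₁, h₂]

lemma rfKernel_nonneg (hp : ∀ i, 1 ≤ i → 0 ≤ p i) (hq : ∀ i, 1 ≤ i → 0 ≤ q i) (x y : ℕ) :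
    0 ≤ rfKernel p q x y := by
  unfold rfKernel
  split_ifs <;> first | exact hp x (by omega) | exact hq x (by omega) | norm_num

end Kernel

/-- The transition operator `f ↦ (x ↦ ∑ y, K x y * f y)`. At `x = 0` the second summand is
`K 0 0 * f 0 = 0`, because `0 - 1 = 0` in `ℕ`. -/
noncomputable def rfStep (p q : ℕ → ℝ) (f : ℕ → ℝ) (x : ℕ) : ℝ :=
  rfKernel p q x (x + 1) * f (x + 1) + rfKernel p q x (x - 1) * f (x - 1)

section Step

variable {p q f : ℕ → ℝ}

@[simp]
lemma rfStep_zero : rfStep p q f 0 = f 1 := by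
  simp [rfStep, rfKernel]

lemma rfStep_of_ne_zero {x : ℕ} (hx : x ≠ 0) :
    rfStep p q f x = p x * f (x + 1) + q x * f (x - 1) := by
  simp [rfStep, rfKernel_self_add_one, rfKernel_self_sub_one, hx]

lemma rfStep_mono (hp : ∀ i, 1 ≤ i → 0 ≤ p i) (hq : ∀ i, 1 ≤ i → 0 ≤ q i) {g : ℕ → ℝ}
    (h : f ≤ g) : rfStep p q f ≤ rfStep p q g := fun x =>
  add_le_add (mul_le_mul_of_nonneg_left (h (x + 1)) (rfKernel_nonneg hp hq _ _))
    (mul_le_mul_of_nonneg_left (h (x - 1)) (rfKernel_nonneg hp hq _ _))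

lemma rfStep_const (hpq : ∀ i, 1 ≤ i → p i + q i = 1) (c : ℝ) :
    rfStep p q (fun _ => c) = fun _ => c := by
  funext x
  rcases eq_or_ne x 0 with rfl | hx
  · simp
  · rw [rfStep_of_ne_zero hx, ← add_mul, hpq x (by omega), one_mul]

lemma continuous_rfStep_apply (x : ℕ) : Continuous fun f => rfStep p q f x := by
  unfold rfStep
  fun_prop

end Step

section Liouville

variable {p q h : ℕ → ℝ}

lemma bseq_nonneg (hp : ∀ i, 1 ≤ i → 0 ≤ p i) (hq : ∀ i, 1 ≤ i → 0 ≤ q i) (n : ℕ) :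
    0 ≤ bseq p q n :=
  Finset.prod_nonneg fun i hi =>
    div_nonneg (hq i (Finset.mem_Icc.1 hi).1) (hp i (Finset.mem_Icc.1 hi).1)

lemma bseq_succ (n : ℕ) : bseq p q (n + 1) = bseq p q n * (q (n + 1) / p (n + 1)) :=
  Finset.prod_Icc_succ_top (by omega) _

lemma increment_of_rfStep_eq (hpq : ∀ i, 1 ≤ i → p i + q i = 1) {x : ℕ} (hx : x ≠ 0)
    (hh : rfStep p q h x = h x) : p x * (h (x + 1) - h x) = q x * (h x - h (x - 1)) := by
  rw [rfStep_of_ne_zero hx] at hh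
  linear_combination hh - h x * hpq x (by omega)

lemma increment_mul_bseq (hpq : ∀ i, 1 ≤ i → p i + q i = 1) (hp : ∀ i, 1 ≤ i → 0 < p i)
    {j : ℕ} (hh : ∀ x, j < x → rfStep p q h x = h x) (d : ℕ) :
    (h (j + d + 1) - h (j + d)) * bseq p q j = (h (j + 1) - h j) * bseq p q (j + d) := by
  induction d with
  | zero => simp
  | succ d ih =>
    have hx := increment_of_rfStep_eq hpq (x := j + d + 1) (by omega) (hh _ (by omega))
    have hpx := (hp (j + d + 1) (by omega)).ne'
    rw [show j + d + 1 - 1 = j + d by omega] at hx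
    rw [show j + (d + 1) = j + d + 1 by omega, bseq_succ]
    field_simp
    linear_combination bseq p q j * hx + q (j + d + 1) * ih

lemma increment_eq_zero_of_not_summable (hpq : ∀ i, 1 ≤ i → p i + q i = 1)
    (hp : ∀ i, 1 ≤ i → 0 < p i) (hq : ∀ i, 1 ≤ i → 0 ≤ q i) (hb : ¬ Summable (bseq p q))
    {C : ℝ} (hC : ∀ x, |h x| ≤ C) {j : ℕ} (hh : ∀ x, j < x → rfStep p q h x = h x) :
    h (j + 1) = h j := by
  by_contra hne
  have hb0 := bseq_nonneg (fun i hi => (hp i hi).le) hq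
  have hΔ : 0 < |h (j + 1) - h j| := abs_pos.2 (sub_ne_zero.2 hne)
  have htelescope : ∀ n, (h (j + n) - h j) * bseq p q j =
      (h (j + 1) - h j) * ∑ d ∈ Finset.range n, bseq p q (d + j) := by
    intro n
    have := Finset.sum_range_sub (fun d => h (j + d)) n
    simp only [add_zero] at this
    rw [← this, Finset.sum_mul, Finset.mul_sum]
    exact Finset.sum_congr rfl fun d _ => by
      rw [← add_assoc, increment_mul_bseq hpq hp hh, add_comm d]
  refine hb ((summable_nat_add_iff j).1 (summable_of_sum_range_le (fun n => hb0 (n + j))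
    (c := 2 * C * bseq p q j / |h (j + 1) - h j|) fun n => ?_))
  rw [le_div_iff₀ hΔ]
  calc (∑ d ∈ Finset.range n, bseq p q (d + j)) * |h (j + 1) - h j|
      = |h (j + n) - h j| * bseq p q j := by
        rw [← abs_of_nonneg (hb0 j), ← abs_mul, htelescope, abs_mul,
          abs_of_nonneg (Finset.sum_nonneg fun d _ => hb0 (d + j)), mul_comm]
    _ ≤ (C + C) * bseq p q j := by
        gcongr
        · exact hb0 j
        · exact (abs_sub _ _).trans (add_le_add (hC _) (hC _))
    _ = 2 * C * bseq p q j := by ring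

theorem eq_of_rfStep_eq_of_ne (hpq : ∀ i, 1 ≤ i → p i + q i = 1)
    (hp : ∀ i, 1 ≤ i → 0 < p i) (hq : ∀ i, 1 ≤ i → 0 ≤ q i) (hb : ¬ Summable (bseq p q))
    {C : ℝ} (hC : ∀ x, |h x| ≤ C) {j : ℕ} (hh : ∀ x ≠ j, rfStep p q h x = h x) (x : ℕ) :
    h x = h j := by
  have hΔ : ∀ x, h (x + 1) = h x := by
    intro x
    induction x with
    | zero =>
      rcases eq_or_ne j 0 with rfl | hj
      · exact increment_eq_zero_of_not_summable hpq hp hq hb hC fun x hx => hh x hx.ne'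
      · simpa using hh 0 hj.symm
    | succ x ih =>
      rcases eq_or_ne (x + 1) j with rfl | hj
      · exact increment_eq_zero_of_not_summable hpq hp hq hb hC fun x hx => hh x hx.ne'
      · have := increment_of_rfStep_eq hpq (x := x + 1) (by omega) (hh _ hj)
        rw [Nat.add_sub_cancel, ih, sub_self, mul_zero] at this
        linarith [(mul_eq_zero.1 this).resolve_left (hp (x + 1) (by omega)).ne']
  have hconst : ∀ x, h x = h 0 := fun x => by
    induction x with
    | zero => rfl
    | succ x ih => rw [hΔ, ih]
  rw [hconst x, hconst j]

end Liouville

/-- `avoidProb p q j M x` is the probability that the chain started at `x` does not visit `j`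
at any of the times `1, …, M`. -/
noncomputable def avoidProb (p q : ℕ → ℝ) (j : ℕ) : ℕ → ℕ → ℝ
  | 0 => fun _ => 1
  | M + 1 => rfStep p q (update (avoidProb p q j M) j 0)

section AvoidProb

variable {p q : ℕ → ℝ} {j : ℕ}

lemma avoidProb_nonneg_and_le_one (hp : ∀ i, 1 ≤ i → 0 ≤ p i) (hq : ∀ i, 1 ≤ i → 0 ≤ q i)
    (hpq : ∀ i, 1 ≤ i → p i + q i = 1) (M : ℕ) :
    0 ≤ avoidProb p q j M ∧ avoidProb p q j M ≤ 1 := by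
  induction M with
  | zero => exact ⟨fun _ => zero_le_one, le_rfl⟩
  | succ M ih =>
    constructor
    · calc (0 : ℕ → ℝ) = rfStep p q (fun _ => 0) := (rfStep_const hpq 0).symm
        _ ≤ _ := rfStep_mono hp hq (le_update_iff.2 ⟨le_rfl, fun y _ => ih.1 y⟩)
    · calc avoidProb p q j (M + 1) ≤ rfStep p q (fun _ => 1) :=
            rfStep_mono hp hq (update_le_iff.2 ⟨zero_le_one, fun y _ => ih.2 y⟩)
        _ = 1 := rfStep_const hpq 1

lemma avoidProb_antitone (hp : ∀ i, 1 ≤ i → 0 ≤ p i) (hq : ∀ i, 1 ≤ i → 0 ≤ q i)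
    (hpq : ∀ i, 1 ≤ i → p i + q i = 1) : Antitone (avoidProb p q j) := by
  refine antitone_nat_of_succ_le fun M => ?_
  induction M with
  | zero => exact (avoidProb_nonneg_and_le_one hp hq hpq 1).2
  | succ M ih => exact rfStep_mono hp hq (update_le_update_iff.2 ⟨le_rfl, fun y _ => ih y⟩)

theorem tendsto_avoidProb_zero (hp : ∀ i, 1 ≤ i → 0 < p i) (hq : ∀ i, 1 ≤ i → 0 ≤ q i)
    (hpq : ∀ i, 1 ≤ i → p i + q i = 1) (hb : ¬ Summable (bseq p q)) (x : ℕ) :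
    Tendsto (fun M => avoidProb p q j M x) atTop (𝓝 0) := by
  have hp' : ∀ i, 1 ≤ i → 0 ≤ p i := fun i hi => (hp i hi).le
  have hbounds := avoidProb_nonneg_and_le_one (j := j) hp' hq hpq
  set L : ℕ → ℝ := fun x => ⨅ M, avoidProb p q j M x
  have hL : Tendsto (avoidProb p q j) atTop (𝓝 L) :=
    tendsto_pi_nhds.2 fun x => tendsto_atTop_ciInf
      (fun _ _ hMN => avoidProb_antitone hp' hq hpq hMN x)
      ⟨0, by rintro _ ⟨M, rfl⟩; exact (hbounds M).1 x⟩
  have hfix : rfStep p q (update L j 0) = L := by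
    funext x
    exact tendsto_nhds_unique
      (((continuous_rfStep_apply x).tendsto _).comp (hL.update j tendsto_const_nhds))
      ((tendsto_pi_nhds.1 hL x).comp (tendsto_add_atTop_nat 1))
  have hL01 : ∀ x, |L x| ≤ 1 := fun x => abs_le.2
    ⟨(neg_one_lt_zero.le).trans (ge_of_tendsto' (tendsto_pi_nhds.1 hL x) fun M => (hbounds M).1 x),
      le_of_tendsto' (tendsto_pi_nhds.1 hL x) fun M => (hbounds M).2 x⟩
  have hzero : update L j 0 = 0 := by
    funext y
    have := eq_of_rfStep_eq_of_ne hpq hp hq hb (C := 1) (h := update L j 0)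
      (fun y => by rcases eq_or_ne y j with rfl | hy <;> simp [*, update_of_ne])
      (fun y hy => by rw [hfix, update_of_ne hy]) y
    simpa using this
  have hLx : L x = 0 := by rw [← hfix, hzero]; simp [rfStep]
  exact hLx ▸ tendsto_pi_nhds.1 hL x

end AvoidProb

def initialCylinder (g : ℕ → ℕ) (N : ℕ) : Set (ℕ → ℕ) := {ω | ∀ m ≤ N, ω m = g m}

def avoidsOn (j : ℕ) (s : Set ℕ) : Set (ℕ → ℕ) := {ω | ∀ n ∈ s, ω n ≠ j}

lemma avoidsOn_anti (j : ℕ) : Antitone (avoidsOn j) := fun _ _ hst _ hω n hn => hω n (hst hn)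

lemma initialCylinder_inter_avoidsOn_subset_iUnion (g : ℕ → ℕ) (j N M : ℕ) :
    initialCylinder g N ∩ avoidsOn j (Set.Ioc N (N + (M + 1))) ⊆
      ⋃ y, initialCylinder (update g (N + 1) y) (N + 1) ∩ avoidsOn j (Set.Ioc N (N + 1 + M)) := by
  rintro ω ⟨hg, hj⟩
  refine Set.mem_iUnion.2 ⟨ω (N + 1), fun m hm => ?_, fun n hn => hj n (by grind)⟩
  rcases eq_or_ne m (N + 1) with rfl | hm'
  · simp
  · simp [update_of_ne hm', hg m (by omega)]

section PathSpace

variable {p q : ℕ → ℝ} {μ : ℕ → Measure (ℕ → ℕ)}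

lemma measure_initialCylinder_update (hp : ∀ i, 1 ≤ i → 0 ≤ p i) (hq : ∀ i, 1 ≤ i → 0 ≤ q i)
    (hlaw : IsRFLaw p q μ) (i N y : ℕ) (g : ℕ → ℕ) :
    μ i (initialCylinder (update g (N + 1) y) (N + 1)) =
      μ i (initialCylinder g N) * ENNReal.ofReal (rfKernel p q (g N) y) := by
  have hprod : ∏ m ∈ Finset.range (N + 1),
      rfKernel p q (update g (N + 1) y m) (update g (N + 1) y (m + 1)) =
      (∏ m ∈ Finset.range N, rfKernel p q (g m) (g (m + 1))) * rfKernel p q (g N) y := by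
    rw [Finset.prod_range_succ, update_self, update_of_ne (by omega)]
    congr 1
    refine Finset.prod_congr rfl fun m hm => ?_
    rw [Finset.mem_range] at hm
    rw [update_of_ne (by omega), update_of_ne (by omega)]
  rw [initialCylinder, initialCylinder, hlaw, hlaw, hprod, update_of_ne (by omega), ← mul_assoc,
    ENNReal.ofReal_mul (mul_nonneg (by positivity) (Finset.prod_nonneg fun _ _ =>
      rfKernel_nonneg hp hq _ _))]

lemma tsum_ofReal_rfKernel_mul (hp : ∀ i, 1 ≤ i → 0 ≤ p i) (hq : ∀ i, 1 ≤ i → 0 ≤ q i)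
    {f : ℕ → ℝ} (hf : 0 ≤ f) (x : ℕ) :
    ∑' y, ENNReal.ofReal (rfKernel p q x y) * ENNReal.ofReal (f y) =
      ENNReal.ofReal (rfStep p q f x) := by
  rw [tsum_eq_sum (s := {x + 1, x - 1}) fun y hy => ?_, Finset.sum_pair (by omega), rfStep,
    ENNReal.ofReal_add (mul_nonneg (rfKernel_nonneg hp hq _ _) (hf _))
      (mul_nonneg (rfKernel_nonneg hp hq _ _) (hf _)),
    ENNReal.ofReal_mul (rfKernel_nonneg hp hq _ _), ENNReal.ofReal_mul (rfKernel_nonneg hp hq _ _)]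
  simp only [Finset.mem_insert, Finset.mem_singleton, not_or] at hy
  simp [rfKernel_eq_zero hy.1 hy.2]

lemma measure_initialCylinder_inter_avoidsOn_le (hp : ∀ i, 1 ≤ i → 0 ≤ p i)
    (hq : ∀ i, 1 ≤ i → 0 ≤ q i) (hpq : ∀ i, 1 ≤ i → p i + q i = 1) (hlaw : IsRFLaw p q μ)
    (i j M N : ℕ) (g : ℕ → ℕ) :
    μ i (initialCylinder g N ∩ avoidsOn j (Set.Ioc N (N + M))) ≤
      μ i (initialCylinder g N) * ENNReal.ofReal (avoidProb p q j M (g N)) := by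
  induction M generalizing N g with
  | zero => simpa [avoidProb] using measure_mono Set.inter_subset_left
  | succ M ih =>
    have hpiece : ∀ y,
        μ i (initialCylinder (update g (N + 1) y) (N + 1) ∩ avoidsOn j (Set.Ioc N (N + 1 + M))) ≤
        μ i (initialCylinder g N) * (ENNReal.ofReal (rfKernel p q (g N) y) *
          ENNReal.ofReal (update (avoidProb p q j M) j 0 y)) := by
      intro y
      rcases eq_or_ne y j with rfl | hy
      · have hempty :
            initialCylinder (update g (N + 1) y) (N + 1) ∩ avoidsOn y (Set.Ioc N (N + 1 + M)) = ∅ :=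
          Set.eq_empty_of_forall_notMem fun ω ⟨hg, hj⟩ =>
            hj (N + 1) ⟨N.lt_succ_self, by omega⟩ (by simpa using hg (N + 1) le_rfl)
        simp [hempty]
      · calc _ ≤ μ i (initialCylinder (update g (N + 1) y) (N + 1) ∩
                avoidsOn j (Set.Ioc (N + 1) (N + 1 + M))) :=
              measure_mono (Set.inter_subset_inter_right _
                (avoidsOn_anti j (Set.Ioc_subset_Ioc_left (Nat.le_succ N))))
          _ ≤ _ := ih _ _
          _ = _ := by
            rw [measure_initialCylinder_update hp hq hlaw, update_of_ne hy, mul_assoc]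
            simp
    have hu := (avoidProb_nonneg_and_le_one (j := j) hp hq hpq M).1
    calc _ ≤ ∑' y, μ i (initialCylinder (update g (N + 1) y) (N + 1) ∩
            avoidsOn j (Set.Ioc N (N + 1 + M))) :=
          (measure_mono (initialCylinder_inter_avoidsOn_subset_iUnion g j N M)).trans
            (measure_iUnion_le _)
      _ ≤ _ := ENNReal.tsum_le_tsum hpiece
      _ = _ := by
        rw [ENNReal.tsum_mul_left, tsum_ofReal_rfKernel_mul hp hq
          (f := update (avoidProb p q j M) j 0) (le_update_iff.2 ⟨le_rfl, fun y _ => hu y⟩)]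
        rfl

theorem measure_avoidsOn_Ioi_eq_zero (hp : ∀ i, 1 ≤ i → 0 < p i) (hq : ∀ i, 1 ≤ i → 0 ≤ q i)
    (hpq : ∀ i, 1 ≤ i → p i + q i = 1) (hlaw : IsRFLaw p q μ) (hb : ¬ Summable (bseq p q))
    (i j N : ℕ) : μ i (avoidsOn j (Set.Ioi N)) = 0 := by
  have hp' : ∀ i, 1 ≤ i → 0 ≤ p i := fun i hi => (hp i hi).le
  have hcylinder : ∀ g, μ i (initialCylinder g N ∩ avoidsOn j (Set.Ioi N)) = 0 := by
    intro g
    have hfin : μ i (initialCylinder g N) ≠ ⊤ := by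
      rw [initialCylinder, hlaw]
      exact ENNReal.ofReal_ne_top
    have hlim := ENNReal.Tendsto.const_mul
      (ENNReal.tendsto_ofReal (tendsto_avoidProb_zero (j := j) hp hq hpq hb (g N))) (.inr hfin)
    rw [ENNReal.ofReal_zero, mul_zero] at hlim
    refine nonpos_iff_eq_zero.1 (ge_of_tendsto' hlim fun M => ?_)
    calc _ ≤ μ i (initialCylinder g N ∩ avoidsOn j (Set.Ioc N (N + M))) :=
          measure_mono (Set.inter_subset_inter_right _ (avoidsOn_anti j Set.Ioc_subset_Ioi_self))
      _ ≤ _ := measure_initialCylinder_inter_avoidsOn_le hp' hq hpq hlaw i j M N g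
  let extend : (Fin (N + 1) → ℕ) → ℕ → ℕ := fun v m => if h : m < N + 1 then v ⟨m, h⟩ else 0
  have hcover : avoidsOn j (Set.Ioi N) ⊆
      ⋃ v, initialCylinder (extend v) N ∩ avoidsOn j (Set.Ioi N) := fun ω hω =>
    Set.mem_iUnion.2
      ⟨fun k => ω k, fun m hm => by simp only [extend, dif_pos (Nat.lt_succ_of_le hm)], hω⟩
  exact measure_mono_null hcover (measure_iUnion_null fun v => hcylinder (extend v))

end PathSpace

theorem stmt6_general (p q : ℕ → ℝ)
    (hp : ∀ i, 1 ≤ i → p i ∈ Set.Ioo (0 : ℝ) 1) (hq : ∀ i, 1 ≤ i → q i ∈ Set.Ioo (0 : ℝ) 1)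
    (hpq : ∀ i, 1 ≤ i → p i + q i = 1)
    (μ : ℕ → Measure (ℕ → ℕ)) (hμ : ∀ i, IsProbabilityMeasure (μ i))
    (hlaw : IsRFLaw p q μ)
    (hb : ¬ Summable (fun n : ℕ => bseq p q (n + 1))) :
    ∀ i j : ℕ, μ i {ω : ℕ → ℕ | {n : ℕ | ω n = j}.Infinite} = 1 := by
  intro i j
  have hnull := measure_avoidsOn_Ioi_eq_zero (fun i hi => (hp i hi).1) (fun i hi => (hq i hi).1.le)
    hpq hlaw (fun h => hb ((summable_nat_add_iff 1).2 h)) i j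
  have hae : ∀ᵐ ω ∂μ i, {n : ℕ | ω n = j}.Infinite := by
    filter_upwards [ae_all_iff.2 fun N => measure_eq_zero_iff_ae_notMem.1 (hnull N)] with ω hω
    refine Nat.frequently_atTop_iff_infinite.1 (frequently_atTop'.2 fun N => ?_)
    simpa [avoidsOn] using hω N
  rw [measure_congr (ae_eq_univ.2 (mem_ae_iff.1 hae)), (hμ i).measure_univ]

theorem stmt6 (p q : ℕ → ℝ)
    (hp : ∀ i, 1 ≤ i → p i ∈ Set.Ioo (0 : ℝ) 1) (hq : ∀ i, 1 ≤ i → q i ∈ Set.Ioo (0 : ℝ) 1)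
    (hpq : ∀ i, 1 ≤ i → p i + q i = 1) (hp0 : p 0 = 1)
    (μ : ℕ → Measure (ℕ → ℕ)) (hμ : ∀ i, IsProbabilityMeasure (μ i))
    (hlaw : IsRFLaw p q μ)
    (hb : ¬ Summable (fun n : ℕ => bseq p q (n + 1))) :
    ∀ i j : ℕ, μ i {ω : ℕ → ℕ | {n : ℕ | ω n = j}.Infinite} = 1 :=
  stmt6_general p q hp hq hpq μ hμ hlaw hb
end

section
/- Let β ∈ ℝ, let W be a real random variable on a probability space (Ω, P) whose law has density f_β on [0,1] (and 0 elsewhere) with respect to Lebesgue measure, and let W_0 be a real random variable, independent of W, taking values in {0} ∪ {2^k : k ∈ ℤ}; write π_{2^k} = P(W_0 = 2^k) for k ∈ ℤ. Set R = W_0 · 2^{−W}. Then for every real r > 0, P(R ≥ r) = ∑_{k∈ℤ} π_{2^k} · G_β(r/2^k). -/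
open MeasureTheory
open scoped ENNReal

/-- The density `f_β`: for `β ≠ 0`, `f_β(x) = β e^{βx}/(e^β - 1)` on `[0,1]` and `0`
elsewhere; `f_0` is the indicator of `[0,1]`. -/
noncomputable def fdens (β : ℝ) : ℝ → ℝ :=
  (Set.Icc (0 : ℝ) 1).indicator
    (fun x => if β = 0 then 1 else β * Real.exp (β * x) / (Real.exp β - 1))

/-- The (complementary) cumulative distribution function `G_β`. -/
noncomputable def Gfun (β : ℝ) (x : ℝ) : ℝ :=
  if x ≤ 1 / 2 then 1
  else if x < 1 then
    (if β = 0 then -Real.log x / Real.log 2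
     else (x ^ (-β / Real.log 2) - 1) / (Real.exp β - 1))
  else 0

/-! On the event `W₀ = 2^k` we have `R ≥ r` iff `W ≤ -log₂ (r / 2^k)`, and `W₀ = 0` contributes
nothing since `r > 0`. These events are disjoint in `k`, independence factors each of them, and
the distribution function of `f_β` at `t` is `(e^{βt} - 1)/(e^β - 1)` (`t` if `β = 0`) with `t`
clamped to `[0, 1]`; at `t = -log₂ c` this is `G_β(c)`. -/

open Real Set ProbabilityTheory

noncomputable def expTiltDensity (β x : ℝ) : ℝ :=
  if β = 0 then 1 else β * exp (β * x) / (exp β - 1)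

noncomputable def expTiltCDF (β s : ℝ) : ℝ :=
  if β = 0 then s else (exp (β * s) - 1) / (exp β - 1)

lemma fdens_eq_indicator (β : ℝ) : fdens β = (Icc 0 1).indicator (expTiltDensity β) := rfl

lemma exp_sub_one_ne_zero {β : ℝ} (hβ : β ≠ 0) : exp β - 1 ≠ 0 :=
  sub_ne_zero.mpr ((exp_eq_one_iff β).not.mpr hβ)

lemma expTiltDensity_nonneg (β x : ℝ) : 0 ≤ expTiltDensity β x := by
  unfold expTiltDensity
  split_ifs with hβ
  · exact zero_le_one
  rcases lt_or_gt_of_ne hβ with hβ | hβ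
  · exact div_nonneg_of_nonpos (mul_nonpos_of_nonpos_of_nonneg hβ.le (exp_pos _).le)
      (sub_nonpos.mpr (exp_lt_one_iff.mpr hβ).le)
  · exact div_nonneg (by positivity) (sub_nonneg.mpr (one_lt_exp_iff.mpr hβ).le)

lemma continuous_expTiltDensity (β : ℝ) : Continuous (expTiltDensity β) := by
  unfold expTiltDensity
  split_ifs <;> fun_prop

lemma hasDerivAt_expTiltCDF (β s : ℝ) :
    HasDerivAt (expTiltCDF β) (expTiltDensity β s) s := by
  unfold expTiltCDF expTiltDensity
  split_ifs with hβ
  · exact hasDerivAt_id s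
  · simpa [mul_comm] using
      (((hasDerivAt_id s).const_mul β).exp.sub_const 1).div_const (exp β - 1)

@[simp] lemma expTiltCDF_zero (β : ℝ) : expTiltCDF β 0 = 0 := by
  simp [expTiltCDF]

@[simp] lemma expTiltCDF_one (β : ℝ) : expTiltCDF β 1 = 1 := by
  unfold expTiltCDF
  split_ifs with hβ
  · rfl
  · rw [mul_one, div_self (exp_sub_one_ne_zero hβ)]

lemma integral_expTiltDensity (β a b : ℝ) :
    ∫ x in a..b, expTiltDensity β x = expTiltCDF β b - expTiltCDF β a :=
  intervalIntegral.integral_eq_sub_of_hasDerivAt (fun x _ => hasDerivAt_expTiltCDF β x)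
    ((continuous_expTiltDensity β).intervalIntegrable a b)

lemma setIntegral_Icc_zero_expTiltDensity (β s : ℝ) :
    ∫ x in Icc 0 s, expTiltDensity β x = expTiltCDF β (max 0 s) := by
  rcases le_total s 0 with hs | hs
  · have : volume.restrict (Icc (0 : ℝ) s) = 0 :=
      Measure.restrict_eq_zero.mpr (by simp [Real.volume_Icc, hs])
    simp [this, hs]
  · rw [max_eq_right hs, integral_Icc_eq_integral_Ioc, ← intervalIntegral.integral_of_le hs,
      integral_expTiltDensity, expTiltCDF_zero, sub_zero]

lemma Iic_inter_Icc {α : Type*} [LinearOrder α] {a b t : α} : Iic t ∩ Icc a b = Icc a (min b t) := by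
  ext
  simp only [mem_inter_iff, mem_Iic, mem_Icc, le_min_iff]
  tauto

lemma lintegral_Iic_fdens (β t : ℝ) :
    ∫⁻ x in Iic t, ENNReal.ofReal (fdens β x) =
      ENNReal.ofReal (expTiltCDF β (max 0 (min 1 t))) := by
  have hint : IntegrableOn (fdens β) (Iic t) := by
    rw [fdens_eq_indicator, IntegrableOn, integrable_indicator_iff measurableSet_Icc]
    exact ((continuous_expTiltDensity β).integrableOn_Icc).restrict
  have hnn : 0 ≤ᵐ[volume.restrict (Iic t)] fdens β :=
    Filter.Eventually.of_forall (indicator_nonneg fun x _ => expTiltDensity_nonneg β x)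
  rw [← ofReal_integral_eq_lintegral_ofReal hint hnn, fdens_eq_indicator,
    setIntegral_indicator measurableSet_Icc, Iic_inter_Icc, setIntegral_Icc_zero_expTiltDensity]

lemma Gfun_eq_expTiltCDF (β : ℝ) {c : ℝ} (hc : 0 < c) :
    Gfun β c = expTiltCDF β (max 0 (min 1 (-logb 2 c))) := by
  have hhalf : c ≤ 1 / 2 ↔ logb 2 c ≤ -1 := by
    rw [logb_le_iff_le_rpow one_lt_two hc, rpow_neg_one, one_div]
  unfold Gfun
  by_cases h₁ : c ≤ 1 / 2
  · rw [if_pos h₁, min_eq_left (by linarith [hhalf.mp h₁]), max_eq_right zero_le_one,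
      expTiltCDF_one]
  rw [if_neg h₁]
  by_cases h₂ : c < 1
  · have h₀ : 0 < -logb 2 c := neg_pos.mpr (logb_neg one_lt_two hc h₂)
    rw [if_pos h₂, min_eq_right (by linarith [hhalf.not.mp h₁]), max_eq_right h₀.le]
    unfold expTiltCDF
    split_ifs with hβ
    · rw [logb, neg_div]
    · rw [rpow_def_of_pos hc, logb]
      ring_nf
  · have h₀ : -logb 2 c ≤ 0 := neg_nonpos.mpr (logb_nonneg one_lt_two (not_lt.mp h₂))
    rw [if_neg h₂, min_eq_right (h₀.trans zero_le_one), max_eq_left h₀, expTiltCDF_zero]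

lemma le_mul_two_rpow_neg_iff {r c : ℝ} (hr : 0 < r) (hc : 0 < c) (x : ℝ) :
    r ≤ c * 2 ^ (-x) ↔ x ≤ -logb 2 (r / c) := by
  rw [← div_le_iff₀' hc, ← logb_le_iff_le_rpow one_lt_two (div_pos hr hc), le_neg]

lemma setOf_le_mul_two_rpow_neg_eq_iUnion {Ω : Type*} {W W₀ : Ω → ℝ}
    (hval : ∀ ω, W₀ ω = 0 ∨ ∃ k : ℤ, W₀ ω = (2 : ℝ) ^ k) {r : ℝ} (hr : 0 < r) :
    {ω | r ≤ W₀ ω * (2 : ℝ) ^ (-W ω)} =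
      ⋃ k : ℤ, W₀ ⁻¹' {(2 : ℝ) ^ k} ∩ W ⁻¹' Iic (-logb 2 (r / (2 : ℝ) ^ k)) := by
  ext ω
  simp only [mem_ofPred_eq, mem_iUnion, mem_inter_iff, mem_preimage, mem_singleton_iff, mem_Iic]
  constructor
  · intro hω
    rcases hval ω with h0 | ⟨k, hk⟩
    · rw [h0, zero_mul] at hω
      exact absurd hω (not_le.mpr hr)
    · rw [hk, le_mul_two_rpow_neg_iff hr (zpow_pos two_pos k)] at hω
      exact ⟨k, hk, hω⟩
  · rintro ⟨k, hk, hle⟩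
    rwa [hk, le_mul_two_rpow_neg_iff hr (zpow_pos two_pos k)]

lemma measure_le_mul_two_rpow_neg_eq_tsum {Ω : Type*} [MeasurableSpace Ω] {P : Measure Ω}
    {W W₀ : Ω → ℝ} (hW : Measurable W) (hW₀ : Measurable W₀) (hindep : IndepFun W W₀ P)
    (hval : ∀ ω, W₀ ω = 0 ∨ ∃ k : ℤ, W₀ ω = (2 : ℝ) ^ k) {r : ℝ} (hr : 0 < r) :
    P {ω | r ≤ W₀ ω * (2 : ℝ) ^ (-W ω)} =
      ∑' k : ℤ, P {ω | W₀ ω = (2 : ℝ) ^ k} * P (W ⁻¹' Iic (-logb 2 (r / (2 : ℝ) ^ k))) := by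
  have hdisj : Pairwise (Function.onFun Disjoint fun k : ℤ =>
      W₀ ⁻¹' {(2 : ℝ) ^ k} ∩ W ⁻¹' Iic (-logb 2 (r / (2 : ℝ) ^ k))) := by
    intro j k hjk
    refine disjoint_left.mpr fun ω hj hk => hjk ?_
    exact zpow_right_injective₀ two_pos (by norm_num) (hj.1.symm.trans hk.1)
  rw [setOf_le_mul_two_rpow_neg_eq_iUnion hval hr,
    measure_iUnion hdisj fun k => (hW₀ (measurableSet_singleton _)).inter (hW measurableSet_Iic)]
  refine tsum_congr fun k => ?_
  rw [inter_comm, hindep.measure_inter_preimage_eq_mul _ _ measurableSet_Iic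
    (measurableSet_singleton _), mul_comm]
  rfl

theorem stmt11_general {Ω : Type*} [MeasurableSpace Ω] (P : Measure Ω)
    (β : ℝ) (W W₀ : Ω → ℝ) (hW : Measurable W) (hW₀ : Measurable W₀)
    (hlaw : P.map W = volume.withDensity (fun x => ENNReal.ofReal (fdens β x)))
    (hindep : ProbabilityTheory.IndepFun W W₀ P)
    (hval : ∀ ω, W₀ ω = 0 ∨ ∃ k : ℤ, W₀ ω = (2 : ℝ) ^ k) :
    ∀ r : ℝ, 0 < r →
      P {ω | r ≤ W₀ ω * (2 : ℝ) ^ (-W ω)} =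
        ∑' k : ℤ, P {ω | W₀ ω = (2 : ℝ) ^ k} * ENNReal.ofReal (Gfun β (r / (2 : ℝ) ^ k)) := by
  intro r hr
  rw [measure_le_mul_two_rpow_neg_eq_tsum hW hW₀ hindep hval hr]
  refine tsum_congr fun k => ?_
  rw [← Measure.map_apply hW measurableSet_Iic, hlaw, withDensity_apply _ measurableSet_Iic,
    lintegral_Iic_fdens, Gfun_eq_expTiltCDF β (div_pos hr (zpow_pos two_pos k))]

theorem stmt11 {Ω : Type*} [MeasurableSpace Ω] (P : Measure Ω) [IsProbabilityMeasure P]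
    (β : ℝ) (W W₀ : Ω → ℝ) (hW : Measurable W) (hW₀ : Measurable W₀)
    (hlaw : P.map W = volume.withDensity (fun x => ENNReal.ofReal (fdens β x)))
    (hindep : ProbabilityTheory.IndepFun W W₀ P)
    (hval : ∀ ω, W₀ ω = 0 ∨ ∃ k : ℤ, W₀ ω = (2 : ℝ) ^ k) :
    ∀ r : ℝ, 0 < r →
      P {ω | r ≤ W₀ ω * (2 : ℝ) ^ (-W ω)} =
        ∑' k : ℤ, P {ω | W₀ ω = (2 : ℝ) ^ k} * ENNReal.ofReal (Gfun β (r / (2 : ℝ) ^ k)) :=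
  stmt11_general P β W W₀ hW hW₀ hlaw hindep hval
end

section
/- Let β = ln 2, let W be a real random variable on a probability space (Ω, P) whose law has density f_{ln 2}(x) = (ln 2)·e^{(ln 2)x}/(e^{ln 2} − 1) = (ln 2)·2^x on [0,1] (and 0 elsewhere) with respect to Lebesgue measure, and let W_0 be a real random variable, independent of W, taking values in {0} ∪ {2^k : k ∈ ℤ}; write π_{2^k} = P(W_0 = 2^k). Set R = W_0 · 2^{−W}. If S = ∑_{k∈ℤ} 2^k π_{2^k} < ∞, then R is integrable and E[R] = S · ln 2. -/
open MeasureTheory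
open scoped ENNReal

/-!
Since `W₀ ≥ 0` takes only the values `0` and `2^k`, `E[W₀] = S`, so `W₀` is integrable.
The factor `2^{-W}` is bounded by `1`, and against the density `(ln 2) 2^x` on `[0,1]` it
integrates to `ln 2`. Independence of `W₀` and `W` then gives `E[W₀ 2^{-W}] = S ln 2`.
-/

open ProbabilityTheory Set Function

theorem lintegral_ofReal_eq_tsum_of_eq_zero_or_eq {Ω ι : Type*} [MeasurableSpace Ω]
    [Countable ι] (μ : Measure Ω) {f : Ω → ℝ} (hf : Measurable f) {a : ι → ℝ}
    (ha : Injective a) (hval : ∀ ω, f ω = 0 ∨ ∃ k, f ω = a k) :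
    ∫⁻ ω, ENNReal.ofReal (f ω) ∂μ = ∑' k, ENNReal.ofReal (a k) * μ {ω | f ω = a k} := by
  have hsplit : ∀ ω, ENNReal.ofReal (f ω) =
      ∑' k, {ω' | f ω' = a k}.indicator (fun _ => ENNReal.ofReal (a k)) ω := by
    intro ω
    rcases hval ω with hω | ⟨c, hω⟩
    · rw [hω, ENNReal.ofReal_zero, eq_comm, ENNReal.tsum_eq_zero]
      intro k
      rw [indicator_apply_eq_zero]
      intro hk
      rw [← show f ω = a k from hk, hω, ENNReal.ofReal_zero]
    · rw [tsum_eq_single c fun k hk => indicator_of_notMem (fun hfk => hk (ha ?_)) _,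
        indicator_of_mem (show ω ∈ {ω' | f ω' = a c} from hω), hω]
      exact (show f ω = a k from hfk).symm.trans hω
  have hmeas : ∀ k, MeasurableSet {ω | f ω = a k} := fun k => hf (measurableSet_singleton _)
  rw [lintegral_congr hsplit,
    lintegral_tsum fun k => (measurable_const.indicator (hmeas k)).aemeasurable]
  exact tsum_congr fun k => lintegral_indicator_const (hmeas k) _

theorem measurable_fdens (β : ℝ) : Measurable (fdens β) :=
  (Measurable.ite (MeasurableSet.const _) measurable_const (by fun_prop)).indicator
    measurableSet_Icc

theorem ae_mem_Icc_withDensity_fdens (β : ℝ) :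
    ∀ᵐ x ∂volume.withDensity (fun x => ENNReal.ofReal (fdens β x)), x ∈ Icc (0 : ℝ) 1 := by
  rw [ae_withDensity_iff (measurable_fdens β).ennreal_ofReal]
  refine ae_of_all _ fun x hx => ?_
  by_contra hIcc
  simp [fdens, indicator_of_notMem hIcc] at hx

theorem fdens_log_two_of_mem_Icc {x : ℝ} (hx : x ∈ Icc (0 : ℝ) 1) :
    fdens (Real.log 2) x = Real.log 2 * 2 ^ x := by
  have hlog : Real.log 2 ≠ 0 := (Real.log_pos one_lt_two).ne'
  simp only [fdens, indicator_of_mem hx, hlog, if_false,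
    Real.exp_log two_pos, ← Real.rpow_def_of_pos two_pos]
  norm_num

theorem integral_two_rpow_neg_withDensity_fdens_log_two :
    ∫ x, (2 : ℝ) ^ (-x) ∂volume.withDensity (fun x => ENNReal.ofReal (fdens (Real.log 2) x)) =
      Real.log 2 := by
  have hprod : (fun x => (ENNReal.ofReal (fdens (Real.log 2) x)).toReal • (2 : ℝ) ^ (-x)) =
      (Icc (0 : ℝ) 1).indicator fun _ => Real.log 2 := by
    funext x
    by_cases hx : x ∈ Icc (0 : ℝ) 1
    · have hpos : 0 ≤ fdens (Real.log 2) x := by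
        rw [fdens_log_two_of_mem_Icc hx]; positivity
      rw [indicator_of_mem hx, smul_eq_mul, ENNReal.toReal_ofReal hpos,
        fdens_log_two_of_mem_Icc hx, mul_assoc, ← Real.rpow_add two_pos, add_neg_cancel,
        Real.rpow_zero, mul_one]
    · simp [fdens, indicator_of_notMem hx]
  rw [integral_withDensity_eq_integral_toReal_smul (measurable_fdens _).ennreal_ofReal
      (ae_of_all _ fun _ => ENNReal.ofReal_lt_top), hprod,
    integral_indicator measurableSet_Icc, setIntegral_const, Real.volume_real_Icc]
  simp

theorem stmt13 {Ω : Type*} [MeasurableSpace Ω] (P : Measure Ω) [IsProbabilityMeasure P]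
    (W W₀ : Ω → ℝ) (hW : Measurable W) (hW₀ : Measurable W₀)
    (hlaw : P.map W = volume.withDensity (fun x => ENNReal.ofReal (fdens (Real.log 2) x)))
    (hindep : ProbabilityTheory.IndepFun W W₀ P)
    (hval : ∀ ω, W₀ ω = 0 ∨ ∃ k : ℤ, W₀ ω = (2 : ℝ) ^ k)
    (hS : (∑' k : ℤ, ENNReal.ofReal ((2 : ℝ) ^ k) * P {ω | W₀ ω = (2 : ℝ) ^ k}) ≠ ⊤) :
    Integrable (fun ω => W₀ ω * (2 : ℝ) ^ (-W ω)) P ∧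
      ∫ ω, W₀ ω * (2 : ℝ) ^ (-W ω) ∂P =
        (∑' k : ℤ, ENNReal.ofReal ((2 : ℝ) ^ k) * P {ω | W₀ ω = (2 : ℝ) ^ k}).toReal *
          Real.log 2 := by
  have hW₀_nonneg : ∀ ω, 0 ≤ W₀ ω := fun ω => by
    rcases hval ω with h | ⟨k, h⟩
    · exact h.ge
    · rw [h]; positivity
  have hlint := lintegral_ofReal_eq_tsum_of_eq_zero_or_eq P hW₀
    (zpow_right_injective₀ two_pos (by norm_num : (2 : ℝ) ≠ 1)) hval
  have hW₀_int : Integrable W₀ P := ⟨hW₀.aestronglyMeasurable, by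
    rw [hasFiniteIntegral_iff_ofReal (ae_of_all _ hW₀_nonneg), hlint]; exact hS.lt_top⟩
  have hg : Measurable fun x : ℝ => (2 : ℝ) ^ (-x) := by fun_prop
  have hg_le_one : ∀ᵐ ω ∂P, ‖(2 : ℝ) ^ (-W ω)‖ ≤ 1 := by
    have hW_mem := ae_of_ae_map hW.aemeasurable (hlaw ▸ ae_mem_Icc_withDensity_fdens _)
    filter_upwards [hW_mem] with ω hω
    rw [Real.norm_of_nonneg (by positivity)]
    exact Real.rpow_le_one_of_one_le_of_nonpos one_le_two (neg_nonpos.2 hω.1)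
  have hg_int : Integrable (fun ω => (2 : ℝ) ^ (-W ω)) P :=
    (integrable_const 1).mono' (hg.comp hW).aestronglyMeasurable hg_le_one
  have hindep' : IndepFun W₀ (fun ω => (2 : ℝ) ^ (-W ω)) P := hindep.symm.comp measurable_id hg
  refine ⟨hindep'.integrable_mul hW₀_int hg_int, ?_⟩
  rw [hindep'.integral_fun_mul_eq_mul_integral hW₀.aestronglyMeasurable
      (hg.comp hW).aestronglyMeasurable,
    integral_eq_lintegral_of_nonneg_ae (ae_of_all _ hW₀_nonneg) hW₀.aestronglyMeasurable, hlint,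
    ← integral_map hW.aemeasurable hg.aestronglyMeasurable, hlaw,
    integral_two_rpow_neg_withDensity_fdens_log_two]
end

section
/- Let (A_i)_{i≥1} be an independent sequence of events in a probability space (Ω, P), and set p_i = P(A_i). Then the probability that only finitely many of the events occur is P({ω ∈ Ω : {i ≥ 1 : ω ∈ A_i} is finite}) = ∏_{i=1}^{∞} (1 − p_i) + ∑_{j=1}^{∞} p_j · ∏_{i=j+1}^{∞} (1 − p_i), where the infinite products are limits of the partial products (which exist in [0,1] by monotonicity). -/
/-!
Let `Bⱼ = ⋂_{i ≥ j} Aᵢᶜ` be the event that none of `Aⱼ, Aⱼ₊₁, …` occurs. By independence and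
continuity from above, `P(Bⱼ) = ∏_{i ≥ j} (1 - pᵢ) = L j`, and the event that only finitely many
`Aᵢ` occur is the increasing union of the `Bⱼ`, so its probability is `lim L j`. Since
`L j = (1 - pⱼ) L (j + 1)`, the series `∑ pⱼ L (j + 1) = ∑ (L (j + 1) - L j)` telescopes to
`lim L j - L 0`.
-/

open MeasureTheory Filter ProbabilityTheory Finset Topology

theorem eq_mul_of_tendsto_prod_Ico {M : Type*} [CommMonoid M] [TopologicalSpace M]
    [ContinuousMul M] [T2Space M] {f L : ℕ → M}
    (hL : ∀ j, Tendsto (fun m => ∏ i ∈ Ico j m, f i) atTop (𝓝 (L j))) (j : ℕ) :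
    L j = f j * L (j + 1) := by
  refine tendsto_nhds_unique (hL j) (((hL (j + 1)).const_mul (f j)).congr' ?_)
  filter_upwards [eventually_gt_atTop j] with m hm
  exact (prod_eq_prod_Ico_succ_bot hm f).symm

theorem hasSum_sub_of_monotone {f : ℕ → ℝ} {ℓ : ℝ} (hf : Monotone f)
    (h : Tendsto f atTop (𝓝 ℓ)) : HasSum (fun j => f (j + 1) - f j) (ℓ - f 0) := by
  rw [hasSum_iff_tendsto_nat_of_nonneg (fun j => sub_nonneg.2 (hf j.le_succ))]
  simpa only [sum_range_sub] using h.sub_const (f 0)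

theorem Set.iInter_iInter_Ico_eq_iInter_ge {Ω : Type*} (B : ℕ → Set Ω) (j : ℕ) :
    ⋂ m, ⋂ i ∈ Finset.Ico j m, B i = ⋂ i ≥ j, B i := by
  ext ω
  simp only [Set.mem_iInter, Finset.mem_Ico]
  exact ⟨fun h i hi => h (i + 1) i ⟨hi, i.lt_succ_self⟩, fun h m i hi => h i hi.1⟩

theorem Set.setOf_finite_eq_iUnion_iInter_compl {Ω : Type*} (A : ℕ → Set Ω) :
    {ω | {i | ω ∈ A i}.Finite} = ⋃ j, ⋂ i ≥ j, (A i)ᶜ := by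
  ext ω
  simp [← Set.not_infinite, ← Nat.frequently_atTop_iff_infinite, frequently_atTop]

section MeasureReal

variable {α : Type*} [MeasurableSpace α] {μ : Measure α} [IsFiniteMeasure μ] {s : ℕ → Set α}

theorem tendsto_measureReal_iUnion_atTop (hs : Monotone s) :
    Tendsto (fun n => μ.real (s n)) atTop (𝓝 (μ.real (⋃ n, s n))) :=
  (ENNReal.tendsto_toReal (measure_ne_top μ _)).comp (tendsto_measure_iUnion_atTop hs)

theorem tendsto_measureReal_iInter_atTop (hsm : ∀ n, MeasurableSet (s n)) (hs : Antitone s) :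
    Tendsto (fun n => μ.real (s n)) atTop (𝓝 (μ.real (⋂ n, s n))) :=
  (ENNReal.tendsto_toReal (measure_ne_top μ _)).comp
    (tendsto_measure_iInter_atTop (fun n => (hsm n).nullMeasurableSet) hs ⟨0, measure_ne_top μ _⟩)

end MeasureReal

namespace ProbabilityTheory.iIndepSet

variable {Ω : Type*} [MeasurableSpace Ω] {P : Measure Ω}

theorem measureReal_biInter_compl {ι : Type*} {A : ι → Set Ω} (hA : ∀ i, MeasurableSet (A i))
    (h : iIndepSet A P) (s : Finset ι) :
    P.real (⋂ i ∈ s, (A i)ᶜ) = ∏ i ∈ s, (1 - P.real (A i)) := by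
  have := h.isProbabilityMeasure
  have hcompl : ∀ i ∈ s, MeasurableSet[MeasurableSpace.generateFrom {A i}] (A i)ᶜ :=
    fun i _ => (MeasurableSpace.measurableSet_generateFrom (Set.mem_singleton _)).compl
  rw [measureReal_def, ((iIndepSet_iff_iIndep A P).1 h).meas_biInter hcompl, ENNReal.toReal_prod]
  exact prod_congr rfl fun i _ => probReal_compl_eq_one_sub (hA i)

theorem tendsto_prod_Ico_one_sub {A : ℕ → Set Ω} (hA : ∀ i, MeasurableSet (A i))
    (h : iIndepSet A P) (j : ℕ) :
    Tendsto (fun m => ∏ i ∈ Ico j m, (1 - P.real (A i))) atTop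
      (𝓝 (P.real (⋂ i ≥ j, (A i)ᶜ))) := by
  have := h.isProbabilityMeasure
  simp_rw [← h.measureReal_biInter_compl hA, ← Set.iInter_iInter_Ico_eq_iInter_ge]
  refine tendsto_measureReal_iInter_atTop
    (fun m => .biInter (Ico j m).countable_toSet fun i _ => (hA i).compl) fun m n hmn => ?_
  exact Set.biInter_subset_biInter_left (Ico_subset_Ico_right hmn)

end ProbabilityTheory.iIndepSet

/-- Borel–Cantelli-type formula: for an independent sequence of events `A₀, A₁, A₂, …`
(the events "A_i, i ≥ 1" of the statement, relabelled to start at index `0`) with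
`pᵢ = P(Aᵢ)`, the probability that only finitely many of them occur equals
`∏_{i=0}^∞ (1 - pᵢ) + ∑_{j=0}^∞ pⱼ ∏_{i=j+1}^∞ (1 - pᵢ)`, where the infinite products
`L j = ∏_{i=j}^∞ (1 - pᵢ)` are the limits of the partial products. -/
theorem stmt17 {Ω : Type*} [MeasurableSpace Ω] (P : Measure Ω) [IsProbabilityMeasure P]
    (A : ℕ → Set Ω) (hA : ∀ i, MeasurableSet (A i))
    (hindep : ProbabilityTheory.iIndepSet A P)
    (L : ℕ → ℝ)
    (hL : ∀ j, Tendsto (fun m => ∏ i ∈ Finset.Ico j m, (1 - (P (A i)).toReal))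
      atTop (nhds (L j))) :
    P {ω | {i : ℕ | ω ∈ A i}.Finite} =
      ENNReal.ofReal (L 0 + ∑' j : ℕ, (P (A j)).toReal * L (j + 1)) := by
  set B : ℕ → Set Ω := fun j => ⋂ i ≥ j, (A i)ᶜ
  have hLB : L = fun j => P.real (B j) :=
    funext fun j => tendsto_nhds_unique (hL j) (hindep.tendsto_prod_Ico_one_sub hA j)
  have hB : Monotone B := fun j k hjk =>
    Set.biInter_subset_biInter_left fun i (hi : k ≤ i) => hjk.trans hi
  have hlim : Tendsto L atTop (𝓝 (P.real {ω | {i : ℕ | ω ∈ A i}.Finite})) := by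
    rw [Set.setOf_finite_eq_iUnion_iInter_compl, hLB]
    exact tendsto_measureReal_iUnion_atTop hB
  have hsum : HasSum (fun j => (P (A j)).toReal * L (j + 1))
      (P.real {ω | {i : ℕ | ω ∈ A i}.Finite} - L 0) := by
    have hmono : Monotone L := hLB ▸ fun j k hjk => measureReal_mono (hB hjk)
    convert hasSum_sub_of_monotone hmono hlim using 2 with j
    rw [eq_mul_of_tendsto_prod_Ico hL j]
    ring
  rw [hsum.tsum_eq, add_sub_cancel, ofReal_measureReal]
end

section
/- Let V be a finite abelian group, n ≥ 1, r ≥ 2, and let σ_1, …, σ_r be fixed-point-free involutions of {1,…,n} (i.e. permutations with σ_l ∘ σ_l = id and σ_l(i) ≠ i for all i). Let C be the n×n integer matrix with entries C_{ij} = |{l ∈ {1,…,r} : σ_l(i) = j}| (the adjacency matrix of the union of the r perfect matchings determined by the σ_l). Then for every q = (q_1,…,q_n) ∈ V^n, the vector (C − I)q ∈ V^n, whose i-th entry is (∑_{l=1}^{r} q_{σ_l(i)}) − q_i, belongs to R^S(q, r−1). -/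
/-!
Write `s = (C - I)q`. Each `sᵢ = ∑ₗ (q_{σₗ(i)} - qₙ) - (qᵢ - qₙ) + (r - 1)•qₙ` lies in
`(r - 1)•qₙ + H`, and `∑ᵢ sᵢ = (r - 1)•∑ᵢ qᵢ` because every `σₗ` permutes the indices.
For the tensor condition, `∑ᵢ qᵢ ⊗ sᵢ = ∑ₗ ∑ᵢ qᵢ ⊗ q_{σₗ(i)} - ∑ᵢ qᵢ ⊗ qᵢ`, and for an
involution `σ` the terms of `∑ᵢ qᵢ ⊗ q_{σ(i)}` pair up into `a ⊗ b + b ⊗ a`, which is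
`(a + b) ⊗ (a + b) - a ⊗ a - b ⊗ b ∈ I(V)`; fixed points contribute squares.
-/

open scoped TensorProduct

/-- The subgroup `H` generated by `{qᵢ - qₙ}`, where `qₙ` is the last coordinate. -/
def Hgrp {V : Type*} [AddCommGroup V] {n : ℕ} (q : Fin (n + 1) → V) : AddSubgroup V :=
  AddSubgroup.closure (Set.range fun i => q i - q (Fin.last n))

/-- `I(V)`: the subgroup of `V ⊗_ℤ V` generated by the elements `v ⊗ v`. -/
noncomputable def Igrp (V : Type*) [AddCommGroup V] : AddSubgroup (V ⊗[ℤ] V) :=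
  AddSubgroup.closure {x : V ⊗[ℤ] V | ∃ v : V, x = v ⊗ₜ[ℤ] v}

/-- `R^S(q, k)`: the set of `s ∈ Vⁿ` with each `sᵢ` in the `k`-fold sumset
`k·𝒞 = k·qₙ + H` of the minimal coset `𝒞 = qₙ + H` containing `{q₁,…,qₙ}`,
with `∑ᵢ qᵢ ⊗ sᵢ ∈ I(V)` and `∑ᵢ sᵢ = k·∑ᵢ qᵢ`. -/
noncomputable def RS {V : Type*} [AddCommGroup V] {n : ℕ} (q : Fin (n + 1) → V) (k : ℕ) :
    Set (Fin (n + 1) → V) :=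
  {s | (∀ i, s i - k • q (Fin.last n) ∈ Hgrp q) ∧
    (∑ i, q i ⊗ₜ[ℤ] s i) ∈ Igrp V ∧
    (∑ i, s i) = k • ∑ i, q i}

section Igrp

variable {V : Type*} [AddCommGroup V]

lemma tmul_self_mem_Igrp (v : V) : v ⊗ₜ[ℤ] v ∈ Igrp V :=
  AddSubgroup.subset_closure ⟨v, rfl⟩

lemma tmul_add_tmul_comm_mem_Igrp (a b : V) : a ⊗ₜ[ℤ] b + b ⊗ₜ[ℤ] a ∈ Igrp V := by
  have h : a ⊗ₜ[ℤ] b + b ⊗ₜ[ℤ] a = (a + b) ⊗ₜ[ℤ] (a + b) - a ⊗ₜ[ℤ] a - b ⊗ₜ[ℤ] b := by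
    simp only [TensorProduct.add_tmul, TensorProduct.tmul_add]
    abel
  rw [h]
  exact sub_mem (sub_mem (tmul_self_mem_Igrp _) (tmul_self_mem_Igrp _)) (tmul_self_mem_Igrp _)

lemma sum_tmul_comp_mem_Igrp_of_involutive {ι : Type*} [Fintype ι] (q : ι → V) {σ : ι → ι}
    (hσ : Function.Involutive σ) : ∑ i, q i ⊗ₜ[ℤ] q (σ i) ∈ Igrp V := by
  rw [← QuotientAddGroup.eq_zero_iff, ← QuotientAddGroup.mk'_apply, map_sum]
  refine Finset.sum_involution (fun i _ => σ i) (fun i _ => ?_) (fun i _ hi h => hi ?_)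
    (fun i _ => Finset.mem_univ _) (fun i _ => hσ i)
  · rw [hσ i, QuotientAddGroup.mk'_apply, QuotientAddGroup.mk'_apply, ← QuotientAddGroup.mk_add,
      QuotientAddGroup.eq_zero_iff]
    exact tmul_add_tmul_comm_mem_Igrp _ _
  · rw [QuotientAddGroup.mk'_apply, QuotientAddGroup.eq_zero_iff, h]
    exact tmul_self_mem_Igrp _

end Igrp

section Hgrp

variable {V : Type*} [AddCommGroup V] {n : ℕ} (q : Fin (n + 1) → V)

lemma sub_last_mem_Hgrp (i : Fin (n + 1)) : q i - q (Fin.last n) ∈ Hgrp q :=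
  AddSubgroup.subset_closure ⟨i, rfl⟩

lemma sum_sub_card_nsmul_mem_Hgrp {κ : Type*} (s : Finset κ) (j : κ → Fin (n + 1)) :
    ∑ l ∈ s, q (j l) - s.card • q (Fin.last n) ∈ Hgrp q := by
  rw [← Finset.sum_const, ← Finset.sum_sub_distrib]
  exact AddSubgroup.sum_mem _ fun l _ => sub_last_mem_Hgrp q (j l)

end Hgrp

theorem stmt19_general {V : Type*} [AddCommGroup V] {n : ℕ}
    (q : Fin (n + 1) → V) (r : ℕ) (hr : 2 ≤ r)
    (σ : Fin r → Fin (n + 1) → Fin (n + 1))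
    (hinv : ∀ l, σ l ∘ σ l = id) :
    (fun i => (∑ l, q (σ l i)) - q i) ∈ RS q (r - 1) := by
  have hσ : ∀ l, Function.Involutive (σ l) := fun l => congrFun (hinv l)
  obtain ⟨k, rfl⟩ : ∃ k, r = k + 1 := ⟨r - 1, by omega⟩
  rw [Nat.add_sub_cancel]
  refine ⟨fun i => ?_, ?_, ?_⟩
  · convert sub_mem (sum_sub_card_nsmul_mem_Hgrp q Finset.univ (σ · i)) (sub_last_mem_Hgrp q i)
      using 1
    dsimp only
    rw [Finset.card_univ, Fintype.card_fin, succ_nsmul]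
    abel
  · simp only [TensorProduct.tmul_sub, TensorProduct.tmul_sum, Finset.sum_sub_distrib]
    rw [Finset.sum_comm]
    exact sub_mem (AddSubgroup.sum_mem _ fun l _ => sum_tmul_comp_mem_Igrp_of_involutive q (hσ l))
      (AddSubgroup.sum_mem _ fun i _ => tmul_self_mem_Igrp _)
  · simp only [Finset.sum_sub_distrib]
    rw [Finset.sum_comm]
    have hperm l : ∑ i, q (σ l i) = ∑ i, q i := Equiv.sum_comp (hσ l).toPerm q
    simp only [hperm, Finset.sum_const, Finset.card_univ,
      Fintype.card_fin, succ_nsmul, add_sub_cancel_right]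

/-- If `σ₁, …, σ_r` are fixed-point-free involutions of `{1,…,n}` and `C` is the
adjacency matrix of the union of the corresponding perfect matchings
(`C_{ij} = #{l : σ_l(i) = j}`), then `(C - I)q`, whose `i`-th entry is
`(∑_l q_{σ_l(i)}) - q_i`, belongs to `R^S(q, r - 1)`. -/
theorem stmt19 {V : Type*} [AddCommGroup V] [Fintype V] {n : ℕ}
    (q : Fin (n + 1) → V) (r : ℕ) (hr : 2 ≤ r)
    (σ : Fin r → Fin (n + 1) → Fin (n + 1))
    (hinv : ∀ l, σ l ∘ σ l = id)
    (hfpf : ∀ l i, σ l i ≠ i) :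
    (fun i => (∑ l, q (σ l i)) - q i) ∈ RS q (r - 1) :=
  stmt19_general q r hr σ hinv
end
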